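/- arXiv:1812.04029 — 13 statements merged into one kernel-verified Lean document; each statement's English description precedes it below -/
import Mathlib

section
/- Let P be a poset and P₀ ⊆ P. If every increasing net in P₀ having a supremum in P₀ has the same supremum in P, and every decreasing net in P₀ having an infimum in P₀ has the same infimum in P, then the subspace topology induced on P₀ by the order topology of P is coarser than the order topology of P₀. -/
universe u

section NetDefs

variable {Γ P : Type u} [Preorder Γ] [Preorder P]

/-- A net `x` increases to `l`: it is monotone and `l` is its supremum. -/
def IncreasingTo (x : Γ → P) (l : P) : Prop :=
  Monotone x ∧ IsLUB (Set.range x) l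

/-- A net `x` decreases to `l`: it is antitone and `l` is its infimum. -/
def DecreasingTo (x : Γ → P) (l : P) : Prop :=
  Antitone x ∧ IsGLB (Set.range x) l

/-- Order convergence of a net in a poset: the net is sandwiched between a net
increasing to `l` and a net decreasing to `l`. -/
def OConvergesTo (x : Γ → P) (l : P) : Prop :=
  ∃ a b : Γ → P, (∀ γ, a γ ≤ x γ) ∧ (∀ γ, x γ ≤ b γ) ∧ IncreasingTo a l ∧ DecreasingTo b l

end NetDefs

/-- A set is o-closed if no net in it (indexed by a nonempty directed set) o-converges
to a point outside it. -/
def IsOClosed {P : Type u} [Preorder P] (X : Set P) : Prop :=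
  ∀ (Γ : Type u) [Preorder Γ] [IsDirected Γ (· ≤ ·)] [Nonempty Γ],
    ∀ (x : Γ → P) (l : P), (∀ γ, x γ ∈ X) → OConvergesTo x l → l ∈ X

/-- The order topology of a poset: the topology whose closed sets are the o-closed sets
(equivalently, the topology generated by the complements of o-closed sets). -/
def orderTopology (P : Type u) [Preorder P] : TopologicalSpace P :=
  TopologicalSpace.generateFrom {U | IsOClosed Uᶜ}

/-- The interval topology of a poset: the coarsest topology in which every ray
`[a,→)` and `(←,a]` is closed. -/
def intervalTopology (P : Type u) [Preorder P] : TopologicalSpace P :=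
  TopologicalSpace.generateFrom {U | (∃ a : P, U = (Set.Ici a)ᶜ) ∨ ∃ a : P, U = (Set.Iic a)ᶜ}

/-! The inclusion `P₀ → P` preserves o-convergence: the increasing and decreasing nets
sandwiching a net in `P₀` keep their supremum and infimum in `P`. Preimages of o-closed sets
under an o-convergence preserving map are o-closed, so such a map is continuous for the order
topologies. -/

def PreservesOConvergence {Q P : Type u} [Preorder Q] [Preorder P] (f : Q → P) : Prop :=
  ∀ (Γ : Type u) [Preorder Γ] [IsDirected Γ (· ≤ ·)] [Nonempty Γ] (x : Γ → Q) (l : Q),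
    OConvergesTo x l → OConvergesTo (f ∘ x) (f l)

theorem OConvergesTo.subtype_val {Γ P : Type u} [Preorder Γ] [Preorder P] {P₀ : Set P}
    {x : Γ → P₀} {l : P₀}
    (hsup : ∀ a : Γ → P₀, Monotone a → IsLUB (Set.range a) l →
      IsLUB (Set.range fun γ => (a γ : P)) (l : P))
    (hinf : ∀ b : Γ → P₀, Antitone b → IsGLB (Set.range b) l →
      IsGLB (Set.range fun γ => (b γ : P)) (l : P))
    (hx : OConvergesTo x l) : OConvergesTo (fun γ => (x γ : P)) (l : P) := by
  obtain ⟨a, b, hax, hxb, ⟨ha_mono, ha_lub⟩, ⟨hb_anti, hb_glb⟩⟩ := hx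
  exact ⟨fun γ => a γ, fun γ => b γ, hax, hxb,
    ⟨fun _ _ h => ha_mono h, hsup a ha_mono ha_lub⟩,
    ⟨fun _ _ h => hb_anti h, hinf b hb_anti hb_glb⟩⟩

section PreservesOConvergence

variable {Q P : Type u} [Preorder Q] [Preorder P] {f : Q → P}

theorem IsOClosed.preimage (hf : PreservesOConvergence f) {X : Set P} (hX : IsOClosed X) :
    IsOClosed (f ⁻¹' X) :=
  fun Γ _ _ _ x l hxX hxl => hX Γ (f ∘ x) (f l) hxX (hf Γ x l hxl)

theorem PreservesOConvergence.orderTopology_le_induced (hf : PreservesOConvergence f) :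
    orderTopology Q ≤ TopologicalSpace.induced f (orderTopology P) := by
  rw [orderTopology, orderTopology, induced_generateFrom_eq]
  refine TopologicalSpace.generateFrom_anti ?_
  rintro _ ⟨U, hU, rfl⟩
  exact hU.preimage hf

end PreservesOConvergence

/-- Let `P₀ ⊆ P`. If every increasing net in `P₀` having a supremum in `P₀` has the same
supremum in `P`, and dually for decreasing nets and infima, then the subspace topology
induced on `P₀` by the order topology of `P` is coarser than the order topology of `P₀`. -/
theorem orderTopology_subspace_coarser {P : Type u} [PartialOrder P] (P₀ : Set P)
    (hsup : ∀ (Γ : Type u) [Preorder Γ] [IsDirected Γ (· ≤ ·)] [Nonempty Γ],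
      ∀ (x : Γ → P₀) (l : P₀), Monotone x → IsLUB (Set.range x) l →
        IsLUB (Set.range fun γ => (x γ : P)) (l : P))
    (hinf : ∀ (Γ : Type u) [Preorder Γ] [IsDirected Γ (· ≤ ·)] [Nonempty Γ],
      ∀ (x : Γ → P₀) (l : P₀), Antitone x → IsGLB (Set.range x) l →
        IsGLB (Set.range fun γ => (x γ : P)) (l : P)) :
    orderTopology P₀ ≤ TopologicalSpace.induced (Subtype.val : P₀ → P) (orderTopology P) := by
  have hval : PreservesOConvergence (Subtype.val : P₀ → P) := fun Γ _ _ _ _ l hxl =>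
    hxl.subtype_val (fun a => hsup Γ a l) (fun b => hinf Γ b l)
  exact hval.orderTopology_le_induced
end

section
/- Let S be a pre-Hilbert space and let {x₁,…,xₙ} and {y₁,…,yₙ} be finite families of vectors in S with ⟨x_i, x_j⟩ = ⟨y_i, y_j⟩ for all i, j ≤ n. Then there exists a linear isometric automorphism U of S such that U x_i = y_i for all i ≤ n and U is the identity on the orthogonal complement of span{x_i, y_i : i ≤ n} in S. -/
/-!
Equal Gram matrices make `∑ cᵢ xᵢ ↦ ∑ cᵢ yᵢ` well defined and inner-product preserving, so
it is a linear isometry from `span {xᵢ}` into the finite-dimensional space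
`W = span {xᵢ, yᵢ}`. Such an isometry extends to an isometric automorphism of `W`, and this
automorphism, extended by the identity on `Wᗮ`, is the required `U`; `W` being
finite-dimensional, `S = W ⊕ Wᗮ` even when `S` is incomplete.
-/

open Submodule
open scoped InnerProductSpace

theorem LinearMap.exists_comp_rangeRestrict_eq_of_ker_le {R M N P : Type*} [Ring R]
    [AddCommGroup M] [AddCommGroup N] [AddCommGroup P] [Module R M] [Module R N] [Module R P]
    {f : M →ₗ[R] N} {g : M →ₗ[R] P} (h : ker f ≤ ker g) :
    ∃ T : range f →ₗ[R] P, T ∘ₗ f.rangeRestrict = g :=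
  ⟨(ker f).liftQ g h ∘ₗ f.quotKerEquivRange.symm.toLinearMap, by
    ext c
    change (ker f).liftQ g h (f.quotKerEquivRange.symm ⟨f c, mem_range_self f c⟩) = g c
    rw [f.quotKerEquivRange_symm_apply_image c]
    rfl⟩

section GramMatrix

variable {𝕜 E : Type*} [RCLike 𝕜] [NormedAddCommGroup E] [InnerProductSpace 𝕜 E]
  {ι : Type*} [Fintype ι] {x y : ι → E}

theorem inner_linearCombination_eq_of_inner_eq (h : ∀ i j, ⟪x i, x j⟫_𝕜 = ⟪y i, y j⟫_𝕜)
    (c d : ι → 𝕜) :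
    ⟪Fintype.linearCombination 𝕜 x c, Fintype.linearCombination 𝕜 x d⟫_𝕜 =
      ⟪Fintype.linearCombination 𝕜 y c, Fintype.linearCombination 𝕜 y d⟫_𝕜 := by
  simp only [Fintype.linearCombination_apply, sum_inner, inner_sum, inner_smul_left,
    inner_smul_right, h]

theorem ker_linearCombination_le_of_inner_eq (h : ∀ i j, ⟪x i, x j⟫_𝕜 = ⟪y i, y j⟫_𝕜) :
    LinearMap.ker (Fintype.linearCombination 𝕜 x) ≤
      LinearMap.ker (Fintype.linearCombination 𝕜 y) := by
  intro c hc
  rw [LinearMap.mem_ker] at hc ⊢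
  have hnorm := inner_linearCombination_eq_of_inner_eq h c c
  rw [hc, inner_zero_left] at hnorm
  exact inner_self_eq_zero.mp hnorm.symm

theorem exists_linearIsometry_span_map_eq_of_inner_eq (h : ∀ i j, ⟪x i, x j⟫_𝕜 = ⟪y i, y j⟫_𝕜) :
    ∃ L : span 𝕜 (Set.range x) →ₗᵢ[𝕜] E, ∀ i, L ⟨x i, subset_span ⟨i, rfl⟩⟩ = y i := by
  classical
  let f := Fintype.linearCombination 𝕜 x
  let g := Fintype.linearCombination 𝕜 y
  obtain ⟨T, hT⟩ := LinearMap.exists_comp_rangeRestrict_eq_of_ker_le (f := f) (g := g)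
    (ker_linearCombination_le_of_inner_eq h)
  have hTf : ∀ c, T (f.rangeRestrict c) = g c := fun c => LinearMap.congr_fun hT c
  have hT_inner : ∀ u v, ⟪T u, T v⟫_𝕜 = ⟪u, v⟫_𝕜 := by
    intro u v
    obtain ⟨c, rfl⟩ := f.surjective_rangeRestrict u
    obtain ⟨d, rfl⟩ := f.surjective_rangeRestrict v
    rw [hTf, hTf]
    exact (inner_linearCombination_eq_of_inner_eq h c d).symm
  refine ⟨(T.isometryOfInner hT_inner).comp
    (LinearIsometryEquiv.ofEq _ _ (Fintype.range_linearCombination 𝕜 x).symm).toLinearIsometry,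
    fun i => ?_⟩
  convert hTf (Pi.single i 1) using 1
  · exact congrArg T (Subtype.ext (by simp [f]))
  · simp [g]

theorem exists_linearIsometryEquiv_map_eq_of_inner_eq [FiniteDimensional 𝕜 E]
    (h : ∀ i j, ⟪x i, x j⟫_𝕜 = ⟪y i, y j⟫_𝕜) : ∃ U : E ≃ₗᵢ[𝕜] E, ∀ i, U (x i) = y i := by
  obtain ⟨L, hL⟩ := exists_linearIsometry_span_map_eq_of_inner_eq h
  exact ⟨L.extend.toLinearIsometryEquiv rfl, fun i => (L.extend_apply _).trans (hL i)⟩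

end GramMatrix

namespace LinearIsometryEquiv

variable {𝕜 E : Type*} [RCLike 𝕜] [NormedAddCommGroup E] [InnerProductSpace 𝕜 E]
  {K : Submodule 𝕜 E} [K.HasOrthogonalProjection]

noncomputable def extendByIdOnOrthogonal (U : K ≃ₗᵢ[𝕜] K) : E ≃ₗᵢ[𝕜] E :=
  K.orthogonalDecomposition.trans
    ((U.withLpProdCongr 2 (refl 𝕜 Kᗮ)).trans K.orthogonalDecomposition.symm)

theorem extendByIdOnOrthogonal_apply (U : K ≃ₗᵢ[𝕜] K) (v : E) :
    U.extendByIdOnOrthogonal v = U (K.orthogonalProjectionOnto v) + Kᗮ.starProjection v := by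
  simp [extendByIdOnOrthogonal]

theorem extendByIdOnOrthogonal_apply_coe (U : K ≃ₗᵢ[𝕜] K) (v : K) :
    U.extendByIdOnOrthogonal v = U v := by
  simp [extendByIdOnOrthogonal_apply]

theorem extendByIdOnOrthogonal_apply_of_mem_orthogonal (U : K ≃ₗᵢ[𝕜] K) {v : E} (hv : v ∈ Kᗮ) :
    U.extendByIdOnOrthogonal v = v := by
  rw [extendByIdOnOrthogonal_apply, orthogonalProjectionOnto_apply_of_mem_orthogonal hv,
    starProjection_eq_self_iff.2 hv, map_zero, coe_zero, zero_add]

end LinearIsometryEquiv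

/-- If `{x₁,…,xₙ}` and `{y₁,…,yₙ}` are finite families of vectors in a pre-Hilbert space `S`
with `⟨xᵢ,xⱼ⟩ = ⟨yᵢ,yⱼ⟩` for all `i,j`, then there is a linear isometric automorphism `U` of
`S` with `U xᵢ = yᵢ` for all `i`, equal to the identity on `(span{xᵢ,yᵢ : i})ᗮ`. -/
theorem exists_isometry_mapping_families {𝕜 S : Type*} [RCLike 𝕜]
    [NormedAddCommGroup S] [InnerProductSpace 𝕜 S]
    (n : ℕ) (x y : Fin n → S)
    (h : ∀ i j, (inner 𝕜 (x i) (x j) : 𝕜) = inner 𝕜 (y i) (y j)) :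
    ∃ U : S ≃ₗᵢ[𝕜] S, (∀ i, U (x i) = y i) ∧
      ∀ v ∈ (Submodule.span 𝕜 (Set.range x ∪ Set.range y))ᗮ, U v = v := by
  set W := span 𝕜 (Set.range x ∪ Set.range y)
  have hxW (i : Fin n) : x i ∈ W := subset_span (Or.inl ⟨i, rfl⟩)
  have hyW (i : Fin n) : y i ∈ W := subset_span (Or.inr ⟨i, rfl⟩)
  have : FiniteDimensional 𝕜 W :=
    .span_of_finite 𝕜 ((Set.finite_range x).union (Set.finite_range y))
  obtain ⟨UW, hUW⟩ := exists_linearIsometryEquiv_map_eq_of_inner_eq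
    (x := fun i => (⟨x i, hxW i⟩ : W)) (y := fun i => ⟨y i, hyW i⟩) h
  refine ⟨UW.extendByIdOnOrthogonal, fun i => ?_,
    fun v hv => UW.extendByIdOnOrthogonal_apply_of_mem_orthogonal hv⟩
  rw [show x i = ((⟨x i, hxW i⟩ : W) : S) from rfl, UW.extendByIdOnOrthogonal_apply_coe, hUW]
end

section
/- Let S be a pre-Hilbert space, L a pre-Hilbert space logic on S, and 𝒳 ⊆ L. Then 𝒳 has an infimum in the poset (L, ⊆) if and only if the set-theoretic intersection ⋂𝒳 belongs to L, and in that case the infimum equals ⋂𝒳. -/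
variable {𝕜 S : Type*} [RCLike 𝕜] [NormedAddCommGroup S] [InnerProductSpace 𝕜 S]

/-- A pre-Hilbert space logic on a pre-Hilbert space `S`: a family of orthogonally closed
linear subspaces containing `{0}`, closed under orthocomplementation and under the
addition of one-dimensional subspaces. -/
def IsPreHilbertLogic (L : Set (Submodule 𝕜 S)) : Prop :=
  (∀ M ∈ L, Mᗮᗮ = M) ∧ (⊥ : Submodule 𝕜 S) ∈ L ∧ (∀ M ∈ L, Mᗮ ∈ L) ∧
    ∀ M ∈ L, ∀ u : S, M ⊔ (𝕜 ∙ u) ∈ L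

section CompleteLattice

variable {α : Type*} [CompleteLattice α] {L X : Set α}

theorem isGLB_subtype_sInf (hX : X ⊆ L) (hXL : sInf X ∈ L) :
    IsGLB {A : L | (A : α) ∈ X} ⟨sInf X, hXL⟩ := by
  refine IsGLB.of_image (f := Subtype.val) Subtype.coe_le_coe ?_
  change IsGLB (Subtype.val '' (Subtype.val ⁻¹' X)) (sInf X)
  rw [Subtype.image_preimage_coe, Set.inter_eq_right.mpr hX]
  exact isGLB_sInf X

theorem IsGLB.coe_le_sInf_of_subtype (hX : X ⊆ L) {m : L}
    (hm : IsGLB {A : L | (A : α) ∈ X} m) : (m : α) ≤ sInf X :=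
  le_sInf fun A hA => mem_lowerBounds.mp hm.1 ⟨A, hX hA⟩ hA

end CompleteLattice

theorem Submodule.sInf_le_of_isGLB_subtype {R M : Type*} [Semiring R] [AddCommMonoid M]
    [Module R M] {L X : Set (Submodule R M)} (hL : ∀ N ∈ L, ∀ u : M, N ⊔ (R ∙ u) ∈ L)
    {m : L} (hm : IsGLB {A : L | (A : Submodule R M) ∈ X} m) : sInf X ≤ m := by
  intro u hu
  -- `m ⊔ span {u}` lies in `L` and below every member of `X`, so it cannot exceed `m`.
  have hlower :
      (⟨m ⊔ (R ∙ u), hL m m.2 u⟩ : L) ∈ lowerBounds {A : L | (A : Submodule R M) ∈ X} :=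
    fun A hA => show (m : Submodule R M) ⊔ (R ∙ u) ≤ A from
      sup_le (hm.1 hA)
        ((Submodule.span_singleton_le_iff_mem u _).mpr (Submodule.mem_sInf.mp hu _ hA))
  exact hm.2 hlower (Submodule.mem_sup_right (Submodule.mem_span_singleton_self u))

/-- In a pre-Hilbert space logic `L` (ordered by inclusion), a subset `𝒳 ⊆ L` has an
infimum in `L` if and only if the set-theoretic intersection `⋂𝒳` (`sInf 𝒳` as a
submodule) belongs to `L`, and in that case the infimum equals `⋂𝒳`. -/
theorem logic_inf_iff (L : Set (Submodule 𝕜 S)) (hL : IsPreHilbertLogic L)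
    (X : Set (Submodule 𝕜 S)) (hX : X ⊆ L) :
    ((∃ m : L, IsGLB {A : L | (A : Submodule 𝕜 S) ∈ X} m) ↔ sInf X ∈ L) ∧
      ∀ m : L, IsGLB {A : L | (A : Submodule 𝕜 S) ∈ X} m → (m : Submodule 𝕜 S) = sInf X := by
  have glb_eq : ∀ m : L, IsGLB {A : L | (A : Submodule 𝕜 S) ∈ X} m →
      (m : Submodule 𝕜 S) = sInf X := fun m hm =>
    le_antisymm (hm.coe_le_sInf_of_subtype hX) (Submodule.sInf_le_of_isGLB_subtype hL.2.2.2 hm)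
  exact ⟨⟨fun ⟨m, hm⟩ => glb_eq m hm ▸ m.2, fun hXL => ⟨_, isGLB_subtype_sInf hX hXL⟩⟩,
    glb_eq⟩
end

section
/- Let S be a pre-Hilbert space, L a pre-Hilbert space logic on S, and 𝒳 ⊆ L. Then 𝒳 has a supremum in (L, ⊆) if and only if (⋃𝒳)^⊥⊥ ∈ L, and in that case the supremum equals (⋃𝒳)^⊥⊥. -/
variable {𝕜 S : Type*} [RCLike 𝕜] [NormedAddCommGroup S] [InnerProductSpace 𝕜 S]

private lemma tri_ortho (K : Submodule 𝕜 S) : Kᗮᗮᗮ = Kᗮ :=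
  le_antisymm (Submodule.orthogonal_le K.le_orthogonal_orthogonal)
    (Submodule.le_orthogonal_orthogonal _)

/-- In a pre-Hilbert space logic `L` (ordered by inclusion), a subset `𝒳 ⊆ L` has a
supremum in `L` if and only if `(⋃𝒳)^⊥⊥` (i.e. `(sSup 𝒳)ᗮᗮ`, noting that the orthogonal
of `⋃𝒳` equals the orthogonal of the submodule it spans) belongs to `L`, and in that case
the supremum equals `(⋃𝒳)^⊥⊥`. -/
theorem logic_sup_iff (L : Set (Submodule 𝕜 S)) (hL : IsPreHilbertLogic L)
    (X : Set (Submodule 𝕜 S)) (hX : X ⊆ L) :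
    ((∃ m : L, IsLUB {A : L | (A : Submodule 𝕜 S) ∈ X} m) ↔ (sSup X)ᗮᗮ ∈ L) ∧
      ∀ m : L, IsLUB {A : L | (A : Submodule 𝕜 S) ∈ X} m → (m : Submodule 𝕜 S) = (sSup X)ᗮᗮ := by
  obtain ⟨hcl, hbot, horth, hsup⟩ := hL
  set M : Submodule 𝕜 S := sSup X with hM
  have key : ∀ m : L, IsLUB {A : L | (A : Submodule 𝕜 S) ∈ X} m →
      (m : Submodule 𝕜 S) = Mᗮᗮ := by
    rintro ⟨N, hN⟩ hm
    have hub : ∀ A ∈ X, A ≤ N := by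
      intro A hA
      exact_mod_cast hm.1 (show (⟨A, hX hA⟩ : L) ∈ {A : L | (A : Submodule 𝕜 S) ∈ X} from hA)
    have hMN : M ≤ N := sSup_le hub
    have h2 : Mᗮᗮ ≤ N := by
      have := Submodule.orthogonal_le (Submodule.orthogonal_le hMN)
      rwa [hcl N hN] at this
    refine le_antisymm ?_ h2
    -- show N ≤ Mᗮᗮ, via Mᗮ ≤ Nᗮ
    have hMort : Mᗮ ≤ Nᗮ := by
      intro u hu
      have hK : Nᗮ ⊔ (𝕜 ∙ u) ∈ L := hsup _ (horth N hN) u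
      have hKo : (Nᗮ ⊔ (𝕜 ∙ u))ᗮ ∈ L := horth _ hK
      have hubK : (⟨(Nᗮ ⊔ (𝕜 ∙ u))ᗮ, hKo⟩ : L) ∈ upperBounds {A : L | (A : Submodule 𝕜 S) ∈ X} := by
        rintro ⟨A, hAL⟩ hA
        have h1 : Nᗮ ⊔ (𝕜 ∙ u) ≤ Aᗮ := by
          refine sup_le (Submodule.orthogonal_le (hub A hA)) ?_
          rw [Submodule.span_singleton_le_iff_mem]
          exact Submodule.orthogonal_le (le_sSup hA) hu
        have : Aᗮᗮ ≤ (Nᗮ ⊔ (𝕜 ∙ u))ᗮ := Submodule.orthogonal_le h1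
        exact_mod_cast le_trans A.le_orthogonal_orthogonal this
      have hNle : N ≤ (Nᗮ ⊔ (𝕜 ∙ u))ᗮ := by exact_mod_cast hm.2 hubK
      have : (Nᗮ ⊔ (𝕜 ∙ u))ᗮᗮ ≤ Nᗮ := Submodule.orthogonal_le hNle
      exact this (Submodule.le_orthogonal_orthogonal _
        (Submodule.mem_sup_right (Submodule.mem_span_singleton_self u)))
    calc (N : Submodule 𝕜 S) = Nᗮᗮ := (hcl N hN).symm
      _ ≤ Mᗮᗮ := Submodule.orthogonal_le hMort
  refine ⟨⟨?_, ?_⟩, key⟩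
  · rintro ⟨m, hm⟩
    rw [← key m hm]
    exact m.2
  · intro h
    refine ⟨⟨Mᗮᗮ, h⟩, ?_, ?_⟩
    · rintro ⟨A, hAL⟩ hA
      exact_mod_cast (le_sSup (α := Submodule 𝕜 S) hA).trans M.le_orthogonal_orthogonal
    · rintro ⟨N, hN⟩ hNub
      have : M ≤ N := sSup_le fun A hA => by exact_mod_cast hNub (show (⟨A, hX hA⟩ : L) ∈ {A : L | (A : Submodule 𝕜 S) ∈ X} from hA)
      calc Mᗮᗮ ≤ Nᗮᗮ := Submodule.orthogonal_le (Submodule.orthogonal_le this)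
        _ = N := hcl N hN
end

section
/- Let S be a pre-Hilbert space and A a splitting subspace of S (i.e. A ⊕ A^⊥ = S). Then for every subset B ⊆ A, the double orthocomplement of B computed inside the inner product space A equals the double orthocomplement of B computed inside S: B^{⊥_A ⊥_A} = B^{⊥_S ⊥_S}. -/
variable {𝕜 S : Type*} [RCLike 𝕜] [NormedAddCommGroup S] [InnerProductSpace 𝕜 S]

/-- The orthogonal of a subset `B` of `S`: `{x ∈ S : ⟨x,b⟩ = 0 for all b ∈ B}`. -/
def perpS (B : Set S) : Set S := {x : S | ∀ b ∈ B, (inner 𝕜 x b : 𝕜) = 0}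

/-- The orthogonal of `B ⊆ A` computed inside `A`: `B^{⊥_A} = B^{⊥_S} ∩ A`. -/
def perpIn (A : Submodule 𝕜 S) (B : Set S) : Set S := perpS (𝕜 := 𝕜) B ∩ (A : Set S)

/-!
Write `K` for the span of `B`, so that `B^{⊥_S} = Kᗮ` and `B^{⊥_A} = Kᗮ ⊓ A`. Since `K ≤ A`,
`Aᗮ ≤ Kᗮ`, and the modular law together with `A ⊔ Aᗮ = ⊤` gives `Kᗮ = (Kᗮ ⊓ A) ⊔ Aᗮ`.
Taking orthogonals, `Kᗮᗮ = (Kᗮ ⊓ A)ᗮ ⊓ Aᗮᗮ = (Kᗮ ⊓ A)ᗮ ⊓ A`, because a splitting subspace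
admits orthogonal projections and hence satisfies `Aᗮᗮ = A`.
-/

open Submodule

theorem perpS_eq_orthogonal_span (B : Set S) :
    perpS (𝕜 := 𝕜) B = ((span 𝕜 B)ᗮ : Set S) := by
  ext x
  simp only [perpS, Set.mem_ofPred_eq, SetLike.mem_coe, mem_orthogonal']
  exact ⟨fun h _ hu => (span_le (p := LinearMap.ker (innerₛₗ 𝕜 x))).mpr h hu,
    fun h b hb => h b (subset_span hb)⟩

theorem perpIn_eq_orthogonal_span_inf (A : Submodule 𝕜 S) (B : Set S) :
    perpIn A B = (((span 𝕜 B)ᗮ ⊓ A : Submodule 𝕜 S) : Set S) := by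
  rw [perpIn, perpS_eq_orthogonal_span, coe_inf]

namespace Submodule

theorem HasOrthogonalProjection.of_sup_orthogonal_eq_top {A : Submodule 𝕜 S}
    (hA : A ⊔ Aᗮ = ⊤) : A.HasOrthogonalProjection where
  exists_orthogonal v := by
    obtain ⟨a, ha, a', ha', rfl⟩ := mem_sup.mp (hA ▸ mem_top : v ∈ A ⊔ Aᗮ)
    exact ⟨a, ha, by rwa [add_sub_cancel_left]⟩

theorem orthogonal_inf_orthogonal_inf_eq_orthogonal_orthogonal {K A : Submodule 𝕜 S}
    [A.HasOrthogonalProjection] (hK : K ≤ A) : (Kᗮ ⊓ A)ᗮ ⊓ A = Kᗮᗮ := by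
  have hsplit : Kᗮ ⊓ A ⊔ Aᗮ = Kᗮ := by
    rw [inf_sup_assoc_of_le _ (orthogonal_le hK), sup_orthogonal_of_hasOrthogonalProjection,
      inf_top_eq]
  calc (Kᗮ ⊓ A)ᗮ ⊓ A = (Kᗮ ⊓ A)ᗮ ⊓ Aᗮᗮ := by rw [orthogonal_orthogonal]
    _ = (Kᗮ ⊓ A ⊔ Aᗮ)ᗮ := inf_orthogonal _ _
    _ = Kᗮᗮ := by rw [hsplit]

end Submodule

/-- If `A` is a splitting subspace of the pre-Hilbert space `S` (`A ⊕ A^⊥ = S`), then for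
every `B ⊆ A` the double orthocomplement of `B` computed inside `A` equals the double
orthocomplement computed inside `S`: `B^{⊥_A⊥_A} = B^{⊥_S⊥_S}`. -/
theorem splitting_double_perp (A : Submodule 𝕜 S) (hA : A ⊔ Aᗮ = ⊤)
    (B : Set S) (hB : B ⊆ (A : Set S)) :
    perpIn A (perpIn A B) = perpS (𝕜 := 𝕜) (perpS (𝕜 := 𝕜) B) := by
  have := HasOrthogonalProjection.of_sup_orthogonal_eq_top hA
  rw [perpIn_eq_orthogonal_span_inf A B, perpIn_eq_orthogonal_span_inf, span_eq,
    perpS_eq_orthogonal_span B, perpS_eq_orthogonal_span, span_eq,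
    orthogonal_inf_orthogonal_inf_eq_orthogonal_orthogonal (span_le.mpr hB)]
end

section
/- Let e₁, e₂, … be an orthonormal basis of ℓ², let e = Σ_{n≥1} (1/n) eₙ and F = (span{e})^⊥. Then the subspaces Aₙ := {e₁,…,eₙ}^⊥ decrease to {0} (i.e. ⋂ₙ Aₙ = {0}), but Aₙ + F = ℓ² for every n; in particular (Aₙ + F) does not decrease to F. -/
/-!
The functional `x ↦ ⟪v, x⟫` vanishes on the hyperplane `F`, so any subspace on which it does not
vanish identically spans `ℓ²` together with `F`. Since `v` has a nonzero coefficient on every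
`eₖ`, it never lies in the finite-dimensional span of `e₀, …, eₙ`, which is exactly the statement
that the functional does not vanish on `Aₙ = {e₀, …, eₙ}ᗮ`.
-/

open Submodule
open scoped InnerProductSpace

section

variable {𝕜 E : Type*} [RCLike 𝕜] [NormedAddCommGroup E] [InnerProductSpace 𝕜 E]

theorem Submodule.sup_orthogonal_singleton_eq_top_of_not_le {K : Submodule 𝕜 E} {v : E}
    (h : ¬K ≤ (𝕜 ∙ v)ᗮ) : K ⊔ (𝕜 ∙ v)ᗮ = ⊤ := by
  obtain ⟨w, hwK, hw⟩ := SetLike.not_le_iff_exists.mp h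
  rw [mem_orthogonal_singleton_iff_inner_right] at hw
  refine eq_top_iff.mpr fun x _ ↦ mem_sup.mpr
    ⟨(⟪v, x⟫_𝕜 / ⟪v, w⟫_𝕜) • w, K.smul_mem _ hwK, x - (⟪v, x⟫_𝕜 / ⟪v, w⟫_𝕜) • w, ?_,
      add_sub_cancel _ _⟩
  rw [mem_orthogonal_singleton_iff_inner_right, inner_sub_right, inner_smul_right,
    div_mul_cancel₀ _ hw, sub_self]

theorem Submodule.orthogonal_sup_orthogonal_singleton_eq_top {S : Submodule 𝕜 E}
    [S.HasOrthogonalProjection] {v : E} (hv : v ∉ S) : Sᗮ ⊔ (𝕜 ∙ v)ᗮ = ⊤ :=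
  sup_orthogonal_singleton_eq_top_of_not_le fun h ↦
    hv (orthogonal_le_orthogonal_iff.mp h (mem_span_singleton_self v))

theorem Orthonormal.mem_orthogonal_span_image {ι : Type*} {e : ι → E} (he : Orthonormal 𝕜 e)
    {s : Set ι} {i : ι} (hi : i ∉ s) : e i ∈ (span 𝕜 (e '' s))ᗮ := by
  have : span 𝕜 {e i} ⟂ span 𝕜 (e '' s) := by
    rw [isOrtho_span]
    rintro _ rfl _ ⟨j, hj, rfl⟩
    exact he.inner_eq_zero (ne_of_mem_of_not_mem hj hi).symm
  exact this (mem_span_singleton_self _)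

theorem antitone_orthogonal_span_image_Iic {ι : Type*} [Preorder ι] (e : ι → E) :
    Antitone fun n ↦ (span 𝕜 (e '' Set.Iic n))ᗮ :=
  fun _ _ h ↦ orthogonal_le (span_mono (Set.image_mono (Set.Iic_subset_Iic.mpr h)))

theorem HilbertBasis.iInter_orthogonal_span_image_Iic {ι : Type*} [Preorder ι]
    (b : HilbertBasis ι 𝕜 E) : ⋂ n, ((span 𝕜 (b '' Set.Iic n))ᗮ : Set E) = {0} := by
  have hsup : ⨆ n, span 𝕜 (b '' Set.Iic n) = span 𝕜 (Set.range b) := by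
    rw [← span_iUnion, ← Set.image_iUnion, Set.iUnion_Iic, Set.image_univ]
  rw [← coe_iInf, iInf_orthogonal, hsup, ← orthogonal_closure, b.dense_span, top_orthogonal_eq_bot,
    bot_coe]

theorem HilbertBasis.inner_tsum_smul {ι : Type*} (b : HilbertBasis ι 𝕜 E)
    {c : ι → 𝕜} (hc : Memℓp c 2) (i : ι) : ⟪b i, ∑' j, c j • b j⟫_𝕜 = c i := by
  rw [(b.hasSum_repr_symm ⟨c, hc⟩).tsum_eq, ← b.repr_apply_apply,
    LinearIsometryEquiv.apply_symm_apply]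

end

theorem memℓp_two_inv_natCast_add_one : Memℓp (fun n : ℕ ↦ ((n : ℝ) + 1)⁻¹) 2 := by
  refine memℓp_gen ?_
  have := (summable_nat_add_iff 1).mpr (Real.summable_nat_pow_inv.mpr one_lt_two)
  simpa using this

theorem infinite_dim_perturbation_not_oContinuous_general
    {H : Type*} [NormedAddCommGroup H] [InnerProductSpace ℝ H]
    (b : HilbertBasis ℕ ℝ H) (v : H) (hv : v = ∑' n : ℕ, (((n : ℝ) + 1)⁻¹) • b n)
    (F : Submodule ℝ H) (hF : F = (ℝ ∙ v)ᗮ)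
    (A : ℕ → Submodule ℝ H)
    (hA : ∀ n, A n = (Submodule.span ℝ (b '' Set.Iic n))ᗮ) :
    Antitone A ∧ (⋂ n, (A n : Set H)) = {0} ∧ (∀ n, A n ⊔ F = ⊤) ∧ F ≠ ⊤ := by
  have hvb : ∀ k, ⟪b k, v⟫_ℝ ≠ 0 := fun k ↦ by
    rw [hv, b.inner_tsum_smul memℓp_two_inv_natCast_add_one]
    positivity
  obtain rfl : A = fun n ↦ (span ℝ (b '' Set.Iic n))ᗮ := funext hA
  subst hF
  refine ⟨antitone_orthogonal_span_image_Iic b, b.iInter_orthogonal_span_image_Iic,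
    fun n ↦ ?_, ?_⟩
  · have : FiniteDimensional ℝ (span ℝ (b '' Set.Iic n)) :=
      FiniteDimensional.span_of_finite ℝ ((Set.finite_Iic n).image b)
    refine orthogonal_sup_orthogonal_singleton_eq_top fun hvS ↦ hvb (n + 1) ?_
    exact inner_left_of_mem_orthogonal hvS
      (b.orthonormal.mem_orthogonal_span_image (by simp))
  · rw [Ne, orthogonal_eq_top_iff, span_singleton_eq_bot]
    rintro rfl
    exact hvb 0 (inner_zero_right _)

/-- Let `(eₙ)` be an orthonormal (Hilbert) basis of `ℓ²` (formalized as a Hilbert space `H`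
with a Hilbert basis indexed by `ℕ`), let `e = Σₙ (1/(n+1)) eₙ` and `F = (span{e})ᗮ`.
Then the subspaces `Aₙ := {e₀,…,eₙ}ᗮ` decrease with intersection `{0}`, but
`Aₙ + F = ℓ²` for every `n`; since `F ≠ ℓ²`, the net `(Aₙ + F)` does not decrease to `F`. -/
theorem infinite_dim_perturbation_not_oContinuous
    {H : Type*} [NormedAddCommGroup H] [InnerProductSpace ℝ H] [CompleteSpace H]
    (b : HilbertBasis ℕ ℝ H) (v : H) (hv : v = ∑' n : ℕ, (((n : ℝ) + 1)⁻¹) • b n)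
    (F : Submodule ℝ H) (hF : F = (ℝ ∙ v)ᗮ)
    (A : ℕ → Submodule ℝ H)
    (hA : ∀ n, A n = (Submodule.span ℝ (b '' Set.Iic n))ᗮ) :
    Antitone A ∧ (⋂ n, (A n : Set H)) = {0} ∧ (∀ n, A n ⊔ F = ⊤) ∧ F ≠ ⊤ :=
  infinite_dim_perturbation_not_oContinuous_general b v hv F hF A hA
end

section
/- Let E be a Hausdorff topological vector space, V a dense linear subspace of E, and N a closed linear subspace of E of finite codimension. Then V ∩ N is dense in N. -/
/-!
The quotient `E ⧸ N` is a finite-dimensional Hausdorff space, in which every subspace is closed;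
so the dense image of `V` is all of `E ⧸ N`. A linear right inverse of `V → E ⧸ N` is then a
continuous linear section `s` of `E → E ⧸ N` with values in `V`, and `p = id - s ∘ mkQ` is a
continuous projection onto `N` which maps `V` into `V ∩ N`. As `p` fixes `N`, every point of
`N = p (closure V)` lies in `closure (p '' V) ⊆ closure (V ∩ N)`.
-/

theorem subset_closure_inter_of_retraction {X : Type*} [TopologicalSpace X] {V N : Set X}
    (hV : Dense V) {p : X → X} (hp : Continuous p) (hfix : ∀ x ∈ N, p x = x)
    (hmaps : Set.MapsTo p V (V ∩ N)) : N ⊆ closure (V ∩ N) := fun x hx =>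
  hfix x hx ▸ map_mem_closure hp (hV.closure_eq ▸ Set.mem_univ x) hmaps

section FiniteDimensional

variable {𝕜 E F : Type*} [NontriviallyNormedField 𝕜] [CompleteSpace 𝕜]
  [AddCommGroup E] [Module 𝕜 E] [TopologicalSpace E] [IsTopologicalAddGroup E]
  [ContinuousSMul 𝕜 E]
  [AddCommGroup F] [Module 𝕜 F] [TopologicalSpace F] [IsTopologicalAddGroup F]
  [ContinuousSMul 𝕜 F] [T2Space F] [FiniteDimensional 𝕜 F]

theorem Submodule.eq_top_of_dense_of_finiteDimensional {W : Submodule 𝕜 F}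
    (hW : Dense (W : Set F)) : W = ⊤ :=
  SetLike.coe_injective <| by
    rw [Submodule.top_coe, ← hW.closure_eq, W.closed_of_finiteDimensional.closure_eq]

theorem LinearMap.exists_continuous_rightInverse_mem_of_map_eq_top (f : E →ₗ[𝕜] F)
    {V : Submodule 𝕜 E} (hV : V.map f = ⊤) :
    ∃ s : F →ₗ[𝕜] E, Continuous s ∧ (∀ y, f (s y) = y) ∧ ∀ y, s y ∈ V := by
  have hrange : LinearMap.range (f ∘ₗ V.subtype) = ⊤ := by
    rw [LinearMap.range_comp, Submodule.range_subtype, hV]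
  obtain ⟨g, hg⟩ := (f ∘ₗ V.subtype).exists_rightInverse_of_surjective hrange
  exact ⟨V.subtype ∘ₗ g, LinearMap.continuous_of_finiteDimensional _,
    fun y => LinearMap.congr_fun hg y, fun y => (g y).2⟩

end FiniteDimensional

theorem dense_inter_of_finite_codim_general {𝕜 E : Type*} [RCLike 𝕜]
    [AddCommGroup E] [Module 𝕜 E] [TopologicalSpace E]
    [IsTopologicalAddGroup E] [ContinuousSMul 𝕜 E]
    (V N : Submodule 𝕜 E) (hV : Dense (V : Set E)) (hN : IsClosed (N : Set E))
    (hcodim : FiniteDimensional 𝕜 (E ⧸ N)) :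
    (N : Set E) ⊆ closure ((V : Set E) ∩ (N : Set E)) := by
  have : IsClosed (N : Set E) := hN
  have hmap : V.map N.mkQ = ⊤ := Submodule.eq_top_of_dense_of_finiteDimensional <| by
    simpa only [Submodule.map_coe] using
      (Submodule.mkQ_surjective N).denseRange.dense_image N.mkQL.continuous hV
  obtain ⟨s, hs, hsec, hsV⟩ := N.mkQ.exists_continuous_rightInverse_mem_of_map_eq_top hmap
  refine subset_closure_inter_of_retraction hV (p := fun x => x - s (N.mkQ x))
    (continuous_id.sub (hs.comp N.mkQL.continuous)) (fun x hx => ?_) (fun x hx => ⟨?_, ?_⟩)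
  · simp [(Submodule.Quotient.mk_eq_zero N).2 hx]
  · exact V.sub_mem hx (hsV _)
  · simp only [SetLike.mem_coe, ← Submodule.Quotient.mk_eq_zero N, ← N.mkQ_apply, map_sub, hsec,
      sub_self]

/-- Let `E` be a Hausdorff topological vector space (over `ℝ` or `ℂ`), `V` a dense linear
subspace of `E` and `N` a closed linear subspace of finite codimension. Then `V ∩ N` is
dense in `N`. -/
theorem dense_inter_of_finite_codim {𝕜 E : Type*} [RCLike 𝕜]
    [AddCommGroup E] [Module 𝕜 E] [TopologicalSpace E]
    [IsTopologicalAddGroup E] [ContinuousSMul 𝕜 E] [T2Space E]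
    (V N : Submodule 𝕜 E) (hV : Dense (V : Set E)) (hN : IsClosed (N : Set E))
    (hcodim : FiniteDimensional 𝕜 (E ⧸ N)) :
    (N : Set E) ⊆ closure ((V : Set E) ∩ (N : Set E)) :=
  dense_inter_of_finite_codim_general V N hV hN hcodim
end

section
/- Let V be a vector space, (A_γ)_{γ∈Γ} a net of linear subspaces of V and (x_γ) a net in V such that the net of cosets (x_γ + A_γ) is decreasing (w.r.t. inclusion) and ⋂_γ (x_γ + A_γ) ⊆ ⋂_γ A_γ. Then the net (span{x_γ} + A_γ) is decreasing and ⋂_γ (span{x_γ} + A_γ) = ⋂_γ A_γ. -/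
/-!
Comparing the cosets at `γ ≤ δ` shows that the subspaces `A γ` decrease and that
`x δ - x γ ∈ A γ`, which gives monotonicity. For the intersection, take `v` in every
`span {x γ} ⊔ A γ`. If `x δ ∈ A δ` for cofinally many `δ`, then `v ∈ A δ` cofinally, hence
everywhere. Otherwise `x δ ∉ A δ` from some `γ₀` on, so the coefficient `c` in
`v ∈ c • x δ + A δ` does not depend on `δ ≥ γ₀`: either `c = 0` and `v ∈ A δ`, or `c⁻¹ • v`
lies in every coset, hence in every `A γ` by hypothesis, and so does `v`.
-/

open Set

namespace Submodule

section Ring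

variable {R V : Type*} [Ring R] [AddCommGroup V] [Module R V] {A B : Submodule R V} {v x y : V}

theorem mem_image_add_left_iff : v ∈ (fun a => x + a) '' (A : Set V) ↔ v - x ∈ A := by
  simp [Set.image_add_left, neg_add_eq_sub]

theorem image_add_left_subset_iff :
    (fun a => x + a) '' (A : Set V) ⊆ (fun a => y + a) '' (B : Set V) ↔ x - y ∈ B ∧ A ≤ B := by
  simp only [subset_def, mem_image_add_left_iff]
  refine ⟨fun h => ⟨by simpa using h x, fun a ha => ?_⟩, fun ⟨hxy, hAB⟩ v hv => ?_⟩
  · convert B.sub_mem (h (x + a) (by simpa using ha)) (by simpa using h x) using 1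
    abel
  · simpa using B.add_mem (hAB hv) hxy

theorem mem_span_singleton_sup_iff : v ∈ (R ∙ x) ⊔ A ↔ ∃ c : R, v - c • x ∈ A := by
  simp only [mem_sup, mem_span_singleton]
  constructor
  · rintro ⟨_, ⟨c, rfl⟩, a, ha, rfl⟩
    exact ⟨c, by simpa using ha⟩
  · rintro ⟨c, hc⟩
    exact ⟨c • x, ⟨c, rfl⟩, v - c • x, hc, by abel⟩

theorem span_singleton_sup_mono (hxy : x - y ∈ B) (hAB : A ≤ B) : (R ∙ x) ⊔ A ≤ (R ∙ y) ⊔ B :=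
  sup_le (span_singleton_le_iff_mem _ _ |>.2 <| mem_span_singleton_sup_iff.2 ⟨1, by simpa⟩)
    (hAB.trans le_sup_right)

end Ring

theorem eq_of_sub_smul_mem_of_sub_smul_mem {K V : Type*} [DivisionRing K] [AddCommGroup V]
    [Module K V] {A : Submodule K V} {v x y : V} {c c' : K} (hx : x ∉ A) (hyx : y - x ∈ A)
    (hc : v - c • x ∈ A) (hc' : v - c' • y ∈ A) : c = c' := by
  by_contra hne
  have : (c' - c) • x ∈ A := by
    convert A.sub_mem (A.sub_mem hc hc') (A.smul_mem c' hyx) using 1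
    simp only [sub_smul, smul_sub]
    abel
  exact hx ((smul_mem_iff _ (sub_ne_zero.2 (Ne.symm hne))).1 this)

end Submodule

theorem Antitone.forall_mem_of_forall_ge {Γ α : Type*} [Preorder Γ] [IsDirected Γ (· ≤ ·)]
    {S : Γ → Set α} (hS : Antitone S) {γ₀ : Γ} {v : α} (h : ∀ δ, γ₀ ≤ δ → v ∈ S δ) (γ : Γ) :
    v ∈ S γ :=
  let ⟨δ, hγδ, hγ₀δ⟩ := directed_of (· ≤ ·) γ γ₀
  hS hγδ (h δ hγ₀δ)

section CosetNet

open Submodule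

variable {K V Γ : Type*} [DivisionRing K] [AddCommGroup V] [Module K V] [Preorder Γ]
  {A : Γ → Submodule K V} {x : Γ → V}

theorem antitone_of_antitone_image_add
    (hdec : Antitone fun γ => (fun a => x γ + a) '' (A γ : Set V)) : Antitone A :=
  fun _ _ h => (image_add_left_subset_iff.1 (hdec h)).2

theorem antitone_span_singleton_sup_of_antitone_image_add
    (hdec : Antitone fun γ => (fun a => x γ + a) '' (A γ : Set V)) :
    Antitone fun γ => (K ∙ x γ) ⊔ A γ :=
  fun _ _ h =>
    let ⟨hx, hA⟩ := image_add_left_subset_iff.1 (hdec h)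
    span_singleton_sup_mono hx hA

theorem mem_of_forall_mem_span_singleton_sup [IsDirected Γ (· ≤ ·)]
    (hdec : Antitone fun γ => (fun a => x γ + a) '' (A γ : Set V))
    (hint : (⋂ γ, (fun a => x γ + a) '' (A γ : Set V)) ⊆ ⋂ γ, (A γ : Set V))
    {v : V} (hv : ∀ γ, v ∈ (K ∙ x γ) ⊔ A γ) (γ : Γ) : v ∈ A γ := by
  have hA := antitone_of_antitone_image_add hdec
  by_cases hfreq : ∀ γ, ∃ δ, γ ≤ δ ∧ x δ ∈ A δ
  · obtain ⟨δ, hγδ, hxδ⟩ := hfreq γ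
    have hδ : (K ∙ x δ) ⊔ A δ = A δ := sup_eq_right.2 ((span_singleton_le_iff_mem _ _).2 hxδ)
    exact hA hγδ (hδ ▸ hv δ)
  push Not at hfreq
  obtain ⟨γ₀, hγ₀⟩ := hfreq
  obtain ⟨c, hc⟩ := mem_span_singleton_sup_iff.1 (hv γ₀)
  -- `x γ₀ ∉ A γ₀` pins down the coefficient of `x δ` in `v` for every `δ ≥ γ₀`
  have hcoset : ∀ δ, γ₀ ≤ δ → v - c • x δ ∈ A δ := by
    intro δ hδ
    obtain ⟨c', hc'⟩ := mem_span_singleton_sup_iff.1 (hv δ)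
    rwa [eq_of_sub_smul_mem_of_sub_smul_mem (hγ₀ γ₀ le_rfl)
      (image_add_left_subset_iff.1 (hdec hδ)).1 hc (hA hδ hc')]
  rcases eq_or_ne c 0 with rfl | hc0
  · exact hA.forall_mem_of_forall_ge (fun δ hδ => by simpa using hcoset δ hδ) γ
  · have hw : c⁻¹ • v ∈ ⋂ γ, (fun a => x γ + a) '' (A γ : Set V) :=
      mem_iInter.2 <| hdec.forall_mem_of_forall_ge fun δ hδ => mem_image_add_left_iff.2 <| by
        simpa [smul_sub, hc0] using (A δ).smul_mem c⁻¹ (hcoset δ hδ)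
    simpa [hc0] using (A γ).smul_mem c (mem_iInter.1 (hint hw) γ)

end CosetNet

theorem decreasing_coset_net_lemma_general {𝕜 V : Type*} [RCLike 𝕜] [AddCommGroup V] [Module 𝕜 V]
    {Γ : Type*} [Preorder Γ] [IsDirected Γ (· ≤ ·)]
    (A : Γ → Submodule 𝕜 V) (x : Γ → V)
    (hdec : ∀ γ₁ γ₂, γ₁ ≤ γ₂ →
      (fun a => x γ₂ + a) '' (A γ₂ : Set V) ⊆ (fun a => x γ₁ + a) '' (A γ₁ : Set V))
    (hint : (⋂ γ, (fun a => x γ + a) '' (A γ : Set V)) ⊆ ⋂ γ, (A γ : Set V)) :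
    Antitone (fun γ => (𝕜 ∙ x γ) ⊔ A γ) ∧
      (⋂ γ, (((𝕜 ∙ x γ) ⊔ A γ : Submodule 𝕜 V) : Set V)) = ⋂ γ, (A γ : Set V) := by
  refine ⟨antitone_span_singleton_sup_of_antitone_image_add hdec, Subset.antisymm ?_ ?_⟩
  · intro v hv
    simp only [mem_iInter, SetLike.mem_coe] at hv ⊢
    exact mem_of_forall_mem_span_singleton_sup hdec hint hv
  · exact iInter_mono fun γ => SetLike.coe_subset_coe.2 le_sup_right

/-- Let `(A_γ)` be a net of linear subspaces of a vector space `V` (over `ℝ` or `ℂ`) and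
`(x_γ)` a net in `V` such that the net of cosets `(x_γ + A_γ)` is decreasing and
`⋂_γ (x_γ + A_γ) ⊆ ⋂_γ A_γ`. Then the net `(span{x_γ} + A_γ)` is decreasing and
`⋂_γ (span{x_γ} + A_γ) = ⋂_γ A_γ`. -/
theorem decreasing_coset_net_lemma {𝕜 V : Type*} [RCLike 𝕜] [AddCommGroup V] [Module 𝕜 V]
    {Γ : Type*} [Preorder Γ] [IsDirected Γ (· ≤ ·)] [Nonempty Γ]
    (A : Γ → Submodule 𝕜 V) (x : Γ → V)
    (hdec : ∀ γ₁ γ₂, γ₁ ≤ γ₂ →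
      (fun a => x γ₂ + a) '' (A γ₂ : Set V) ⊆ (fun a => x γ₁ + a) '' (A γ₁ : Set V))
    (hint : (⋂ γ, (fun a => x γ + a) '' (A γ : Set V)) ⊆ ⋂ γ, (A γ : Set V)) :
    Antitone (fun γ => (𝕜 ∙ x γ) ⊔ A γ) ∧
      (⋂ γ, (((𝕜 ∙ x γ) ⊔ A γ : Submodule 𝕜 V) : Set V)) = ⋂ γ, (A γ : Set V) :=
  decreasing_coset_net_lemma_general A x hdec hint
end

section
/- Let S be an incomplete pre-Hilbert space with completion H, and let u ∈ H \ S. For each finite dimensional subspace F of S let P_F denote the orthogonal projection onto F. Then the net (span{P_F u} + F^{⊥_S})_{F}, indexed by the finite dimensional subspaces F of S directed by inclusion, is decreasing and its intersection over all F is {0}. -/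
variable {𝕜 H : Type*} [RCLike 𝕜] [NormedAddCommGroup H] [InnerProductSpace 𝕜 H]
  [CompleteSpace H]

/-- The orthogonal projection of `u` onto a finite dimensional subspace `F`. -/
noncomputable def projVec (F : Submodule 𝕜 H) (hF : FiniteDimensional 𝕜 F) (u : H) : H :=
  letI := hF
  (F.orthogonalProjectionOnto u : H)

/-! The finite dimensional subspaces `F ≤ S` form a directed family whose union `S` is dense, so
`P_F u → u`. For `F ≤ G`, `P_G u - P_F u` lies in `F^⊥ ∩ S`, which gives monotonicity. A common
element `x` of the net lies in `S` (take `F = 0`); if `x ≠ 0`, then for `F ∋ x` the component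
of `x` in `F^⊥` lies in `F ∩ F^⊥ = 0`, so `x ∈ span{P_F u}`, i.e. `P_F u ∈ span{x}`. Since
`span{x}` is closed, `u ∈ span{x} ⊆ S`, a contradiction. -/

open Filter Topology

section

variable {E : Type*} [NormedAddCommGroup E] [InnerProductSpace 𝕜 E]

namespace Submodule

abbrev FiniteDimensionalLE (S : Submodule 𝕜 E) : Type _ :=
  {F : Submodule 𝕜 E // FiniteDimensional 𝕜 F ∧ F ≤ S}

instance {S : Submodule 𝕜 E} (F : S.FiniteDimensionalLE) : FiniteDimensional 𝕜 F.1 := F.2.1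

instance {S : Submodule 𝕜 E} : Nonempty S.FiniteDimensionalLE := ⟨⟨⊥, inferInstance, bot_le⟩⟩

instance {S : Submodule 𝕜 E} : IsDirectedOrder S.FiniteDimensionalLE where
  directed F G := ⟨⟨F.1 ⊔ G.1, inferInstance, sup_le F.2.2 G.2.2⟩,
    (le_sup_left : F.1 ≤ F.1 ⊔ G.1), (le_sup_right : G.1 ≤ F.1 ⊔ G.1)⟩

theorem starProjection_sub_starProjection_mem_orthogonal {K L : Submodule 𝕜 E}
    [K.HasOrthogonalProjection] [L.HasOrthogonalProjection] (h : K ≤ L) (u : E) :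
    L.starProjection u - K.starProjection u ∈ Kᗮ := by
  have hKL : K.starProjection (L.starProjection u) = K.starProjection u := by
    rw [← ContinuousLinearMap.comp_apply, starProjection_comp_starProjection_of_le h]
  simpa only [hKL] using K.sub_starProjection_mem_orthogonal (L.starProjection u)

theorem span_starProjection_sup_orthogonal_inf_le {K L S : Submodule 𝕜 E}
    [K.HasOrthogonalProjection] [L.HasOrthogonalProjection] (hL : L ≤ S) (h : K ≤ L) (u : E) :
    (𝕜 ∙ L.starProjection u) ⊔ (Lᗮ ⊓ S) ≤ (𝕜 ∙ K.starProjection u) ⊔ (Kᗮ ⊓ S) := by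
  refine sup_le ((span_singleton_le_iff_mem _ _).2 ?_) (le_sup_of_le_right
    (inf_le_inf_right S (orthogonal_le h)))
  have h_mem := add_mem_sup (mem_span_singleton_self (K.starProjection u))
    (mem_inf.2 ⟨starProjection_sub_starProjection_mem_orthogonal h u,
      sub_mem (hL (L.starProjection_apply_mem u)) (hL (h (K.starProjection_apply_mem u)))⟩)
  rwa [add_sub_cancel] at h_mem

theorem mem_span_singleton_of_mem_sup_orthogonal {K : Submodule 𝕜 E} {v x : E} (hv : v ∈ K)
    (hx : x ∈ K) (h : x ∈ (𝕜 ∙ v) ⊔ Kᗮ) : x ∈ 𝕜 ∙ v := by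
  obtain ⟨a, ha, b, hb, rfl⟩ := mem_sup.1 h
  have hbK : b ∈ K := by
    simpa only [add_sub_cancel_left] using sub_mem hx ((span_singleton_le_iff_mem v K).2 hv ha)
  have hb0 : b = 0 := inner_self_eq_zero.1 ((mem_orthogonal' K b).1 hb b hbK)
  rwa [hb0, add_zero]

theorem tendsto_starProjection_finiteDimensionalLE {S : Submodule 𝕜 E} (hS : Dense (S : Set E))
    (u : E) : Tendsto (fun F : S.FiniteDimensionalLE => F.1.starProjection u) atTop (𝓝 u) := by
  refine starProjection_tendsto_self (fun F : S.FiniteDimensionalLE => F.1) (fun _ _ h => h) u ?_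
  have hS_le : S ≤ ⨆ F : S.FiniteDimensionalLE, F.1 := fun s hs =>
    le_iSup (fun F : S.FiniteDimensionalLE => F.1) ⟨𝕜 ∙ s, inferInstance,
      (span_singleton_le_iff_mem s S).2 hs⟩ (mem_span_singleton_self s)
  rw [← dense_iff_topologicalClosure_eq_top.1 hS]
  exact topologicalClosure_mono hS_le

theorem eq_zero_of_forall_mem_span_starProjection_sup_orthogonal {S : Submodule 𝕜 E}
    (hS : Dense (S : Set E)) {u x : E} (hu : u ∉ S) (hxS : x ∈ S)
    (hx : ∀ F : S.FiniteDimensionalLE, x ∈ (𝕜 ∙ F.1.starProjection u) ⊔ F.1ᗮ) : x = 0 := by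
  by_contra hx0
  have hproj : ∀ᶠ F : S.FiniteDimensionalLE in atTop, F.1.starProjection u ∈ 𝕜 ∙ x := by
    filter_upwards [eventually_ge_atTop ⟨𝕜 ∙ x, inferInstance,
      (span_singleton_le_iff_mem x S).2 hxS⟩] with F hF
    obtain ⟨c, hc⟩ := mem_span_singleton.1 <| mem_span_singleton_of_mem_sup_orthogonal
      (F.1.starProjection_apply_mem u) (hF (mem_span_singleton_self x)) (hx F)
    subst hc
    exact (smul_mem_iff _ (left_ne_zero_of_smul hx0)).1 (mem_span_singleton_self _)
  exact hu <| (span_singleton_le_iff_mem x S).2 hxS <|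
    (𝕜 ∙ x).closed_of_finiteDimensional.mem_of_tendsto
      (tendsto_starProjection_finiteDimensionalLE hS u) hproj

end Submodule

end

open Submodule in
/-- Let `S` be an incomplete pre-Hilbert space (a dense proper subspace of its Hilbert
space completion `H`) and `u ∈ H \ S`. Then the net `(span{P_F u} + F^{⊥_S})_F`, indexed
by the finite dimensional subspaces `F` of `S` directed by inclusion, is decreasing and
its intersection over all `F` is `{0}`. -/
theorem projection_net_decreases_to_zero (S : Submodule 𝕜 H) (hS : Dense (S : Set H))
    (u : H) (hu : u ∉ S) :
    (∀ F G : {F : Submodule 𝕜 H // FiniteDimensional 𝕜 F ∧ F ≤ S}, F.1 ≤ G.1 →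
        (𝕜 ∙ projVec G.1 G.2.1 u) ⊔ (G.1ᗮ ⊓ S) ≤ (𝕜 ∙ projVec F.1 F.2.1 u) ⊔ (F.1ᗮ ⊓ S)) ∧
      (⋂ F : {F : Submodule 𝕜 H // FiniteDimensional 𝕜 F ∧ F ≤ S},
          (((𝕜 ∙ projVec F.1 F.2.1 u) ⊔ (F.1ᗮ ⊓ S) : Submodule 𝕜 H) : Set H)) = {0} := by
  refine ⟨fun F G hFG => span_starProjection_sup_orthogonal_inf_le G.2.2 hFG u, ?_⟩
  refine Set.eq_singleton_iff_unique_mem.2 ⟨Set.mem_iInter.2 fun _ => zero_mem _, fun x hx => ?_⟩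
  rw [Set.mem_iInter] at hx
  have hxS : x ∈ S := by simpa [projVec] using hx ⟨⊥, inferInstance, bot_le⟩
  exact eq_zero_of_forall_mem_span_starProjection_sup_orthogonal hS hu hxS fun F =>
    (sup_le_sup_left inf_le_left _ : _ ≤ (𝕜 ∙ _) ⊔ F.1ᗮ) (hx F)
end

section
/- Let S be a complete pre-Hilbert space (Hilbert space) and suppose (x_γ) is a net in the unit ball of S such that for every y ∈ S the net of lines span{x_γ + y} o-converges to {0} in the poset P(S) of finite/cofinite dimensional subspaces. Then a contradiction arises; i.e., no such net exists when S is complete. Equivalently: if such a net exists, S is incomplete. -/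
/-- The poset `P(S)` of finite/cofinite dimensional subspaces of a pre-Hilbert space. -/
def finCofinSubspaces (𝕜 S : Type*) [RCLike 𝕜] [NormedAddCommGroup S]
    [InnerProductSpace 𝕜 S] : Set (Submodule 𝕜 S) :=
  {M | FiniteDimensional 𝕜 M ∨ ∃ N : Submodule 𝕜 S, FiniteDimensional 𝕜 N ∧ M = Nᗮ}

/-!
Along an ultrafilter finer than `atTop`, the functionals `⟪x γ, ·⟫` have a weak-* limit
(Banach–Alaoglu), which by Riesz is `⟪w, ·⟫` for some `w`. Members of `P(S)` are closed
subspaces, hence weakly closed, so `w + y` lies in every `A γ` and therefore `w + y = 0`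
for every `y`, which is absurd once `S ≠ 0`.
-/

section

open Filter Topology

variable {𝕜 S ι : Type*} [RCLike 𝕜] [NormedAddCommGroup S] [InnerProductSpace 𝕜 S]

theorem isClosed_of_mem_finCofinSubspaces {M : Submodule 𝕜 S} (hM : M ∈ finCofinSubspaces 𝕜 S) :
    IsClosed (M : Set S) := by
  rcases hM with hfin | ⟨N, -, rfl⟩
  · exact M.closed_of_finiteDimensional
  · exact N.isClosed_orthogonal

variable [CompleteSpace S]

theorem exists_tendsto_inner_of_norm_le (U : Ultrafilter ι) {x : ι → S} {R : ℝ}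
    (hx : ∀ i, ‖x i‖ ≤ R) :
    ∃ w : S, ∀ z, Tendsto (fun i => inner 𝕜 (x i) z) U (𝓝 (inner 𝕜 w z)) := by
  let φ : ι → WeakDual 𝕜 S := fun i => StrongDual.toWeakDual (innerSL 𝕜 (x i))
  have hφ : ∀ᶠ i in (U : Filter ι), φ i ∈ WeakDual.toStrongDual ⁻¹' Metric.closedBall 0 R :=
    Eventually.of_forall fun i => by simpa [φ] using hx i
  obtain ⟨F, -, hF⟩ := (WeakDual.isCompact_closedBall (0 : StrongDual 𝕜 S) R).ultrafilter_le_nhds'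
    (U.map φ) hφ
  refine ⟨(InnerProductSpace.toDual 𝕜 S).symm (WeakDual.toStrongDual F), fun z => ?_⟩
  rw [InnerProductSpace.toDual_symm_apply]
  exact tendsto_iff_forall_eval_tendsto_topDualPairing.1 hF z

theorem Submodule.mem_of_tendsto_inner {K : Submodule 𝕜 S} (hK : IsClosed (K : Set S))
    {l : Filter ι} [l.NeBot] {x : ι → S} {w : S}
    (hw : ∀ z, Tendsto (fun i => inner 𝕜 (x i) z) l (𝓝 (inner 𝕜 w z)))
    (hxK : ∀ᶠ i in l, x i ∈ K) : w ∈ K := by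
  rw [← hK.submodule_topologicalClosure_eq, ← K.orthogonal_orthogonal_eq_closure,
    Submodule.mem_orthogonal']
  intro m hm
  refine tendsto_nhds_unique (hw m) (tendsto_const_nhds.congr' ?_)
  filter_upwards [hxK] with i hi
  exact ((K.mem_orthogonal m).1 hm (x i) hi).symm

end

/-- If `S` is a complete pre-Hilbert space (Hilbert space) and `(x_γ)` is a net in the
unit ball of `S` such that for every `y ∈ S` the net of lines `span{x_γ + y}` o-converges
to `{0}` in `P(S)` (i.e. there is a decreasing net `(A_γ)` in `P(S)` with `⋂ A_γ = {0}`
and `span{x_γ + y} ⊆ A_γ`), then a contradiction arises: no such net exists. -/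
theorem no_escaping_net_in_complete_space {𝕜 S : Type*} [RCLike 𝕜]
    [NormedAddCommGroup S] [InnerProductSpace 𝕜 S] [CompleteSpace S] [Nontrivial S]
    {Γ : Type*} [Preorder Γ] [IsDirected Γ (· ≤ ·)] [Nonempty Γ]
    (x : Γ → S) (hx : ∀ γ, ‖x γ‖ ≤ 1)
    (h : ∀ y : S, ∃ A : Γ → Submodule 𝕜 S,
      (∀ γ, A γ ∈ finCofinSubspaces 𝕜 S) ∧ Antitone A ∧
        (⋂ γ, (A γ : Set S)) = {0} ∧ ∀ γ, (𝕜 ∙ (x γ + y)) ≤ A γ) :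
    False := by
  obtain ⟨U, hU⟩ := Filter.exists_ultrafilter_le (Filter.atTop : Filter Γ)
  obtain ⟨w, hw⟩ := exists_tendsto_inner_of_norm_le (𝕜 := 𝕜) U hx
  have hw_add : ∀ y, w + y = 0 := by
    intro y
    obtain ⟨A, hA, hA_anti, hA_inter, hA_span⟩ := h y
    have hmem : ∀ γ, w + y ∈ A γ := fun γ =>
      Submodule.mem_of_tendsto_inner (isClosed_of_mem_finCofinSubspaces (hA γ))
        (fun z => by simpa only [inner_add_left] using (hw z).add_const (inner 𝕜 y z))
        (hU <| (Filter.eventually_ge_atTop γ).mono fun γ' hγ' =>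
          hA_anti hγ' (hA_span γ' (Submodule.mem_span_singleton_self _)))
    simpa [hA_inter] using Set.mem_iInter.2 hmem
  obtain ⟨v, hv⟩ := exists_ne (0 : S)
  have hw0 : w = 0 := by simpa using hw_add 0
  exact hv (by simpa [hw0] using hw_add v)
end

section
/- Let V be a real inner product space of dimension at least 3, let x ≠ y be unit vectors in V, and let 0 < ε < 2. Then there exist unit vectors e₀ = x, e₁, …, e_{n+1} = y in V with ‖e_i − e_{i−1}‖ = ε for every i = 1, …, n+1. Consequently, if f is a non-constant real-valued function on the unit sphere of V, then there exist unit vectors x, y with ‖x − y‖ = ε and f(x) < f(y). -/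
/-!
Put `c = 1 - ε ^ 2 / 2`, so that unit vectors are at distance `ε` iff their inner product is `c`.
If `x, z` are unit vectors with `2 c ^ 2 ≤ 1 + ⟪x, z⟫`, a unit vector `w` with
`⟪w, x⟫ = ⟪w, z⟫ = c` is found in the span of `x + z` and a unit vector orthogonal to `x` and `z`
(this is where `dim V ≥ 3` enters), giving a chain `x, w, z`. Since `|c| < 1`, this applies to all
`z` close to `x`, so the classes of the equivalence relation "joined by an `ε`-chain" are open,
and the sphere, being connected, is a single class. Along a chain from `a` to `b` with
`f a < f b`, some step must increase `f`.
-/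

open RealInnerProductSpace Metric Relation

namespace Relation.TransGen

variable {α : Type*} {r : α → α → Prop} {a b : α}

theorem exists_fin_chain (h : TransGen r a b) :
    ∃ (n : ℕ) (e : Fin (n + 2) → α), e 0 = a ∧ e (Fin.last (n + 1)) = b ∧
      ∀ i : Fin (n + 1), r (e i.castSucc) (e i.succ) := by
  induction h with
  | single hab => exact ⟨0, ![a, _], rfl, rfl, fun i => by fin_cases i; exact hab⟩
  | @tail b c _ hbc ih =>
    obtain ⟨n, e, he0, hlast, hstep⟩ := ih
    refine ⟨n + 1, Fin.snoc e c, by simpa using he0, Fin.snoc_last _ _, fun i => ?_⟩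
    induction i using Fin.lastCases with
    | last => rwa [Fin.succ_last, Fin.snoc_last, Fin.snoc_castSucc, hlast]
    | cast j => rw [Fin.succ_castSucc, Fin.snoc_castSucc, Fin.snoc_castSucc]; exact hstep j

theorem exists_rel_lt {β : Type*} [LinearOrder β] {f : α → β} (h : TransGen r a b)
    (hab : f a < f b) : ∃ x y, r x y ∧ f x < f y := by
  induction h with
  | single hab' => exact ⟨_, _, hab', hab⟩
  | @tail b c _ hbc ih =>
    by_cases hfbc : f b < f c
    · exact ⟨b, c, hbc, hfbc⟩
    · exact ih (hab.trans_le (not_lt.mp hfbc))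

end Relation.TransGen

section

variable {V : Type*} [NormedAddCommGroup V] [InnerProductSpace ℝ V]

theorem exists_norm_eq_one_inner_eq_zero (hdim : 3 ≤ Module.rank ℝ V) (x z : V) :
    ∃ u : V, ‖u‖ = 1 ∧ ⟪u, x⟫ = 0 ∧ ⟪u, z⟫ = 0 := by
  set K := Submodule.span ℝ {x, z}
  have : FiniteDimensional ℝ K :=
    FiniteDimensional.span_of_finite ℝ ((Set.finite_singleton z).insert x)
  have hK : Kᗮ ≠ ⊥ := by
    intro hbot
    have hrank : Module.rank ℝ K ≤ 2 :=
      (rank_span_le _).trans <| Cardinal.mk_insert_le.trans (by simp [one_add_one_eq_two])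
    rw [Submodule.orthogonal_eq_bot_iff.mp hbot, rank_top] at hrank
    exact absurd (hdim.trans hrank) (by norm_num)
  obtain ⟨v, hv, hv0⟩ := Submodule.exists_mem_ne_zero_of_ne_bot hK
  refine ⟨‖v‖⁻¹ • v, norm_smul_inv_norm hv0, ?_, ?_⟩ <;>
    rw [real_inner_smul_left,
      Submodule.inner_left_of_mem_orthogonal (Submodule.subset_span (by simp)) hv, mul_zero]

theorem norm_sub_eq_of_inner_eq {x y : V} (hx : ‖x‖ = 1) (hy : ‖y‖ = 1) {ε : ℝ} (hε : 0 ≤ ε)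
    (h : ⟪x, y⟫ = 1 - ε ^ 2 / 2) : ‖x - y‖ = ε := by
  rw [← sq_eq_sq₀ (norm_nonneg _) hε, norm_sub_sq_real, hx, hy, h]
  ring

theorem exists_norm_eq_one_inner_eq_inner_eq (hdim : 3 ≤ Module.rank ℝ V) {x z : V}
    (hx : ‖x‖ = 1) (hz : ‖z‖ = 1) {c : ℝ} (hc : 2 * c ^ 2 ≤ 1 + ⟪x, z⟫) :
    ∃ w : V, ‖w‖ = 1 ∧ ⟪w, x⟫ = c ∧ ⟪w, z⟫ = c := by
  obtain ⟨u, hu, hux, huz⟩ := exists_norm_eq_one_inner_eq_zero hdim x z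
  rcases (neg_one_le_real_inner_of_norm_eq_one hx hz).eq_or_lt with ht | ht
  · have hc0 : c = 0 := by nlinarith
    exact ⟨u, hu, hc0 ▸ hux, hc0 ▸ huz⟩
  set a := c / (1 + ⟪x, z⟫)
  have hat : a * (1 + ⟪x, z⟫) = c := div_mul_cancel₀ c (by linarith)
  set b := √(1 - 2 * a * c)
  have hb : b * b = 1 - 2 * a * c := by
    refine Real.mul_self_sqrt ?_
    have : (1 - 2 * a * c) * (1 + ⟪x, z⟫) = 1 + ⟪x, z⟫ - 2 * c ^ 2 := by
      linear_combination (-2 * c) * hat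
    exact nonneg_of_mul_nonneg_left (this ▸ sub_nonneg.mpr hc) (by linarith)
  set w := a • (x + z) + b • u
  have hwx : ⟪w, x⟫ = c := by
    simp only [w, inner_add_left, real_inner_smul_left, inner_self_eq_one_of_norm_eq_one hx,
      real_inner_comm x z, hux]
    linear_combination hat
  have hwz : ⟪w, z⟫ = c := by
    simp only [w, inner_add_left, real_inner_smul_left, inner_self_eq_one_of_norm_eq_one hz, huz]
    linear_combination hat
  have hwu : ⟪w, u⟫ = b := by
    simp only [w, inner_add_left, real_inner_smul_left, inner_self_eq_one_of_norm_eq_one hu,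
      real_inner_comm u x, real_inner_comm u z, hux, huz]
    ring
  have hww : ‖w‖ ^ 2 = 1 := by
    calc ‖w‖ ^ 2 = ⟪w, a • (x + z) + b • u⟫ := (real_inner_self_eq_norm_sq w).symm
      _ = a * (⟪w, x⟫ + ⟪w, z⟫) + b * ⟪w, u⟫ := by
        rw [inner_add_right, real_inner_smul_right, inner_add_right, real_inner_smul_right]
      _ = 1 := by rw [hwx, hwz, hwu]; linear_combination hb
  exact ⟨w, (pow_eq_one_iff_of_nonneg (norm_nonneg w) two_ne_zero).mp hww, hwx, hwz⟩

def IsSphereStep (ε : ℝ) (x y : V) : Prop :=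
  ‖x‖ = 1 ∧ ‖y‖ = 1 ∧ ‖y - x‖ = ε

instance (ε : ℝ) : Std.Symm (IsSphereStep (V := V) ε) :=
  ⟨fun _ _ ⟨hx, hy, hxy⟩ => ⟨hy, hx, by rwa [norm_sub_rev]⟩⟩

theorem exists_isSphereStep_isSphereStep (hdim : 3 ≤ Module.rank ℝ V) {ε : ℝ} (hε : 0 ≤ ε)
    {x z : V} (hx : ‖x‖ = 1) (hz : ‖z‖ = 1) (h : 2 * (1 - ε ^ 2 / 2) ^ 2 ≤ 1 + ⟪x, z⟫) :
    ∃ w, IsSphereStep ε x w ∧ IsSphereStep ε w z := by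
  obtain ⟨w, hw, hwx, hwz⟩ := exists_norm_eq_one_inner_eq_inner_eq hdim hx hz h
  refine ⟨w, ⟨hx, hw, norm_sub_eq_of_inner_eq hw hx hε hwx⟩,
    ⟨hw, hz, norm_sub_eq_of_inner_eq hz hw hε ?_⟩⟩
  rwa [real_inner_comm]

theorem transGen_isSphereStep (hdim : 3 ≤ Module.rank ℝ V) {ε : ℝ} (hε0 : 0 < ε) (hε2 : ε < 2)
    {x y : V} (hx : ‖x‖ = 1) (hy : ‖y‖ = 1) : TransGen (IsSphereStep ε) x y := by
  have hsphere : IsPreconnected (sphere (0 : V) 1) :=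
    (isConnected_sphere ((by norm_num : (1 : Cardinal) < 3).trans_le hdim) 0
      zero_le_one).isPreconnected
  refine hsphere.induction₂ _ (fun p hp => ?_) (fun _ _ _ _ _ _ => TransGen.trans)
    (fun _ _ _ _ => symm) (mem_sphere_zero_iff_norm.mpr hx) (mem_sphere_zero_iff_norm.mpr hy)
  rw [mem_sphere_zero_iff_norm] at hp
  have hnear : IsOpen {z | 2 * (1 - ε ^ 2 / 2) ^ 2 < 1 + ⟪p, z⟫} :=
    isOpen_lt continuous_const (continuous_const.add (continuous_const.inner continuous_id))
  have hp_near : 2 * (1 - ε ^ 2 / 2) ^ 2 < 1 + ⟪p, p⟫ := by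
    have hε4 : ε ^ 2 < 4 := by nlinarith
    rw [inner_self_eq_one_of_norm_eq_one hp]
    nlinarith [mul_pos (pow_pos hε0 2) (sub_pos.mpr hε4)]
  filter_upwards [self_mem_nhdsWithin, mem_nhdsWithin_of_mem_nhds (hnear.mem_nhds hp_near)]
    with z hz hpz
  obtain ⟨w, hpw, hwz⟩ :=
    exists_isSphereStep_isSphereStep hdim hε0.le hp (mem_sphere_zero_iff_norm.mp hz) hpz.le
  exact .head hpw (.single hwz)

end

/-- Let `V` be a real inner product space of dimension at least 3 and `0 < ε < 2`. Then any
two distinct unit vectors `x ≠ y` can be joined by a strict `ε`-chain of unit vectors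
(consecutive distances exactly `ε`); consequently, if `f` is a non-constant real-valued
function on the unit sphere of `V`, there exist unit vectors `x, y` with `‖x - y‖ = ε`
and `f x < f y`. -/
theorem strict_chain_on_sphere {V : Type*} [NormedAddCommGroup V] [InnerProductSpace ℝ V]
    (hdim : 3 ≤ Module.rank ℝ V) (ε : ℝ) (hε0 : 0 < ε) (hε2 : ε < 2) :
    (∀ x y : V, ‖x‖ = 1 → ‖y‖ = 1 → x ≠ y →
      ∃ (n : ℕ) (e : Fin (n + 2) → V), e 0 = x ∧ e (Fin.last (n + 1)) = y ∧
        (∀ i, ‖e i‖ = 1) ∧ ∀ i : Fin (n + 1), ‖e i.succ - e i.castSucc‖ = ε) ∧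
      ∀ f : V → ℝ, (∃ a b : V, ‖a‖ = 1 ∧ ‖b‖ = 1 ∧ f a ≠ f b) →
        ∃ x y : V, ‖x‖ = 1 ∧ ‖y‖ = 1 ∧ ‖x - y‖ = ε ∧ f x < f y := by
  have hchain {x y : V} (hx : ‖x‖ = 1) (hy : ‖y‖ = 1) : TransGen (IsSphereStep ε) x y :=
    transGen_isSphereStep hdim hε0 hε2 hx hy
  refine ⟨fun x y hx hy _ => ?_, fun f ⟨a, b, ha, hb, hfab⟩ => ?_⟩
  · obtain ⟨n, e, he0, hlast, hstep⟩ := (hchain hx hy).exists_fin_chain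
    exact ⟨n, e, he0, hlast, Fin.cases (he0 ▸ hx) fun i => (hstep i).2.1, fun i => (hstep i).2.2⟩
  · wlog hlt : f a < f b generalizing a b
    · exact this b a hb ha hfab.symm (hfab.lt_or_gt.resolve_left hlt)
    obtain ⟨x, y, ⟨hx, hy, hxy⟩, hf⟩ := (hchain ha hb).exists_rel_lt hlt
    exact ⟨x, y, hx, hy, by rwa [norm_sub_rev], hf⟩
end

section
/- Let S be a pre-Hilbert space, L a pre-Hilbert space logic on S, and s a state on (S, L). If A, B, C ∈ L with A ⊆ B ⊆ C, the orthogonal complement of A inside B is {0}, and the orthogonal complement of B inside C is {0}, then s(A) = s(B) = s(C). More precisely: if A ⊆ B with A^{⊥_S} ∩ B = {0} and A, B ∈ L, then s(A) = s(B). -/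
/-!
Adding `A` to the orthogonal `Bᗮ` of a larger `B` leaves no room: `(A ⊔ Bᗮ)ᗮ = Aᗮ ⊓ B = {0}`,
so the orthogonal pair `A`, `Bᗮ` has join `(A ⊔ Bᗮ)ᗮᗮ = S` and `s A + s Bᗮ = s S = 1`.
The same holds for `B`, `Bᗮ`, hence `s A = 1 - s Bᗮ = s B`.
-/

variable {𝕜 S : Type*} [RCLike 𝕜] [NormedAddCommGroup S] [InnerProductSpace 𝕜 S]

theorem IsPreHilbertLogic.top_mem {L : Set (Submodule 𝕜 S)} (hL : IsPreHilbertLogic L) :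
    ⊤ ∈ L := by
  simpa only [Submodule.bot_orthogonal_eq_top] using hL.2.2.1 ⊥ hL.2.1

theorem Submodule.sup_orthogonal_orthogonal_eq_top {A B : Submodule 𝕜 S}
    (h : Aᗮ ⊓ Bᗮ = ⊥) : (A ⊔ B)ᗮᗮ = ⊤ := by
  rw [← Submodule.inf_orthogonal, h, Submodule.bot_orthogonal_eq_top]

theorem state_add_eq_one_of_orthogonal_inf_eq_bot {L : Set (Submodule 𝕜 S)} (htop : ⊤ ∈ L)
    {s : Submodule 𝕜 S → ℝ} (hone : s ⊤ = 1)
    (hadd : ∀ A B : Submodule 𝕜 S, A ∈ L → B ∈ L → A ≤ Bᗮ → (A ⊔ B)ᗮᗮ ∈ L →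
      s ((A ⊔ B)ᗮᗮ) = s A + s B)
    {A B : Submodule 𝕜 S} (hA : A ∈ L) (hB : B ∈ L) (hAB : A ≤ Bᗮ) (h : Aᗮ ⊓ Bᗮ = ⊥) :
    s A + s B = 1 := by
  have hsup := Submodule.sup_orthogonal_orthogonal_eq_top h
  rw [← hadd A B hA hB hAB (hsup ▸ htop), hsup, hone]

theorem state_eq_of_le_of_orthogonal_inf_eq_bot {L : Set (Submodule 𝕜 S)}
    (hL : IsPreHilbertLogic L) {s : Submodule 𝕜 S → ℝ} (hone : s ⊤ = 1)
    (hadd : ∀ A B : Submodule 𝕜 S, A ∈ L → B ∈ L → A ≤ Bᗮ → (A ⊔ B)ᗮᗮ ∈ L →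
      s ((A ⊔ B)ᗮᗮ) = s A + s B)
    {A B : Submodule 𝕜 S} (hA : A ∈ L) (hB : B ∈ L) (hAB : A ≤ B) (h : Aᗮ ⊓ B = ⊥) :
    s A = s B := by
  have hBc : Bᗮ ∈ L := hL.2.2.1 B hB
  have hBcc : Bᗮᗮ = B := hL.1 B hB
  have hA_compl : s A + s Bᗮ = 1 :=
    state_add_eq_one_of_orthogonal_inf_eq_bot hL.top_mem hone hadd hA hBc
      (by rwa [hBcc]) (by rwa [hBcc])
  have hB_compl : s B + s Bᗮ = 1 :=
    state_add_eq_one_of_orthogonal_inf_eq_bot hL.top_mem hone hadd hB hBc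
      (Submodule.le_orthogonal_orthogonal B) (Submodule.inf_orthogonal_eq_bot Bᗮ)
  linarith

theorem state_eq_of_trivial_relative_complement_general
    (L : Set (Submodule 𝕜 S)) (hL : IsPreHilbertLogic L)
    (s : Submodule 𝕜 S → ℝ)
    (hone : s (⊤ : Submodule 𝕜 S) = 1)
    (hadd : ∀ A B : Submodule 𝕜 S, A ∈ L → B ∈ L → A ≤ Bᗮ → (A ⊔ B)ᗮᗮ ∈ L →
      s ((A ⊔ B)ᗮᗮ) = s A + s B) :
    (∀ A B : Submodule 𝕜 S, A ∈ L → B ∈ L → A ≤ B → Aᗮ ⊓ B = ⊥ → s A = s B) ∧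
      ∀ A B C : Submodule 𝕜 S, A ∈ L → B ∈ L → C ∈ L → A ≤ B → B ≤ C →
        Aᗮ ⊓ B = ⊥ → Bᗮ ⊓ C = ⊥ → s A = s B ∧ s B = s C := by
  have key : ∀ A B : Submodule 𝕜 S, A ∈ L → B ∈ L → A ≤ B → Aᗮ ⊓ B = ⊥ → s A = s B :=
    fun _ _ => state_eq_of_le_of_orthogonal_inf_eq_bot hL hone hadd
  exact ⟨key, fun A B C hA hB hC hAB hBC h₁ h₂ => ⟨key A B hA hB hAB h₁, key B C hB hC hBC h₂⟩⟩

/-- Let `s` be a state on a pre-Hilbert space logic `(S, L)` (a `[0,1]`-valued map with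
`s(S) = 1`, additive on orthogonal pairs whose join lies in `L`). If `A ⊆ B` in `L` and
the orthocomplement of `A` inside `B` is `{0}` (i.e. `Aᗮ ∩ B = {0}`), then `s(A) = s(B)`;
consequently, for `A ⊆ B ⊆ C` in `L` with `Aᗮ ∩ B = {0}` and `Bᗮ ∩ C = {0}`,
`s(A) = s(B) = s(C)`. -/
theorem state_eq_of_trivial_relative_complement
    (L : Set (Submodule 𝕜 S)) (hL : IsPreHilbertLogic L)
    (s : Submodule 𝕜 S → ℝ)
    (hrange : ∀ M ∈ L, s M ∈ Set.Icc (0 : ℝ) 1)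
    (hone : s (⊤ : Submodule 𝕜 S) = 1)
    (hadd : ∀ A B : Submodule 𝕜 S, A ∈ L → B ∈ L → A ≤ Bᗮ → (A ⊔ B)ᗮᗮ ∈ L →
      s ((A ⊔ B)ᗮᗮ) = s A + s B) :
    (∀ A B : Submodule 𝕜 S, A ∈ L → B ∈ L → A ≤ B → Aᗮ ⊓ B = ⊥ → s A = s B) ∧
      ∀ A B C : Submodule 𝕜 S, A ∈ L → B ∈ L → C ∈ L → A ≤ B → B ≤ C →
        Aᗮ ⊓ B = ⊥ → Bᗮ ⊓ C = ⊥ → s A = s B ∧ s B = s C :=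
  state_eq_of_trivial_relative_complement_general L hL s hone hadd
end

section
/- Let S be a pre-Hilbert space and L a pre-Hilbert space logic on S. If L contains a subspace B which is not splitting (B + B^⊥ ≠ S), then every state on (S, L) is free, i.e. vanishes on all one-dimensional subspaces of S that belong to L. Conversely, if L ⊆ E(S) (every member of L is splitting), then (S, L) admits a non-free state. Hence (S,L) has a non-free state if and only if every member of L is splitting. -/
variable {𝕜 S : Type*} [RCLike 𝕜] [NormedAddCommGroup S] [InnerProductSpace 𝕜 S]

/-- A state on a pre-Hilbert space logic `(S, L)`: a `[0,1]`-valued map with `s(S) = 1`,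
additive on orthogonal pairs whose join lies in `L`. -/
def IsLogicState (L : Set (Submodule 𝕜 S)) (s : Submodule 𝕜 S → ℝ) : Prop :=
  (∀ M ∈ L, s M ∈ Set.Icc (0 : ℝ) 1) ∧ s (⊤ : Submodule 𝕜 S) = 1 ∧
    ∀ A B : Submodule 𝕜 S, A ∈ L → B ∈ L → A ≤ Bᗮ → (A ⊔ B)ᗮᗮ ∈ L →
      s ((A ⊔ B)ᗮᗮ) = s A + s B

/-!
Let `B ∈ L` and `x ∉ B + Bᗮ`. In the modular lattice of subspaces, `C = B + span x` and
`D = Bᗮ + span x` meet `Bᗮ` and `B` trivially and meet each other in `span x`. Orthoadditivity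
then forces `s C = s B`, `s D = s Bᗮ` and `s C + s D = 1 + s (span x)`, so `s (span x) = 0`.
Isometric automorphisms act transitively on lines and preserve `L`, so every line carries
state `0`; peeling off one line at a time, so does every finite dimensional member of `L`.

Conversely, a vector state `M ↦ ‖P_M e‖²` needs orthogonal projections onto the members of `L`,
and these exist exactly when the members split.
-/

open Submodule
open scoped InnerProductSpace

namespace Submodule

theorem reflection_sub_of_inner_comm {v w : S} (hn : ‖v‖ = ‖w‖) (hi : ⟪v, w⟫_𝕜 = ⟪w, v⟫_𝕜) :
    reflection (𝕜 ∙ (v - w))ᗮ v = w := by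
  set R := reflection (𝕜 ∙ (v - w))ᗮ
  have hsub : R (v - w) = -(v - w) := reflection_orthogonalComplement_singleton_eq_neg (v - w)
  have hadd : R (v + w) = v + w := by
    refine reflection_mem_subspace_eq_self ?_
    rw [mem_orthogonal_singleton_iff_inner_right, inner_add_right, inner_sub_left,
      inner_sub_left, inner_self_eq_norm_sq_to_K, inner_self_eq_norm_sq_to_K, hn, hi]
    ring
  calc R v = (2 : 𝕜)⁻¹ • (R (v + w) + R (v - w)) := by
        rw [← map_add, ← map_smul]; congr 1; module
    _ = w := by rw [hadd, hsub]; module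

theorem exists_linearIsometryEquiv_span_singleton_eq {x u : S} (hx : x ≠ 0) (hu : u ≠ 0) :
    ∃ T : S ≃ₗᵢ[𝕜] S, 𝕜 ∙ T x = 𝕜 ∙ u := by
  obtain ⟨c, hc, hca⟩ := RCLike.exists_norm_eq_mul_self ⟪x, u⟫_𝕜
  -- `μ • u` has the norm of `x` and a real inner product with it, so a reflection swaps them
  set μ : 𝕜 := ((‖x‖ / ‖u‖ : ℝ) : 𝕜) * c
  have hμ : μ ≠ 0 := mul_ne_zero (by simp [hx, hu]) (norm_ne_zero_iff.1 (by simp [hc]))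
  have hn : ‖x‖ = ‖μ • u‖ := by
    rw [norm_smul, norm_mul, hc, RCLike.norm_ofReal, abs_of_nonneg (by positivity), mul_one,
      div_mul_cancel₀ _ (norm_ne_zero_iff.2 hu)]
  have hreal : ⟪x, μ • u⟫_𝕜 = ((‖x‖ / ‖u‖ * ‖⟪x, u⟫_𝕜‖ : ℝ) : 𝕜) := by
    rw [inner_smul_right, mul_assoc, ← hca]; push_cast; ring
  have hi : ⟪x, μ • u⟫_𝕜 = ⟪μ • u, x⟫_𝕜 := by
    rw [← inner_conj_symm (μ • u) x, hreal, RCLike.conj_ofReal]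
  exact ⟨reflection (𝕜 ∙ (x - μ • u))ᗮ, by
    rw [reflection_sub_of_inner_comm hn hi, span_singleton_smul_eq (IsUnit.mk0 μ hμ)]⟩

theorem hasOrthogonalProjection_of_sup_orthogonal_eq_top {K : Submodule 𝕜 S}
    (h : K ⊔ Kᗮ = ⊤) : K.HasOrthogonalProjection where
  exists_orthogonal v := by
    obtain ⟨w, hw, z, hz, rfl⟩ := mem_sup.1 (h.symm ▸ mem_top : v ∈ K ⊔ Kᗮ)
    exact ⟨w, hw, by rwa [add_sub_cancel_left]⟩

end Submodule

namespace IsPreHilbertLogic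

variable {L : Set (Submodule 𝕜 S)} {M : Submodule 𝕜 S}

theorem orthogonal_orthogonal (hL : IsPreHilbertLogic L) (hM : M ∈ L) : Mᗮᗮ = M := hL.1 M hM

theorem bot_mem (hL : IsPreHilbertLogic L) : (⊥ : Submodule 𝕜 S) ∈ L := hL.2.1

theorem orthogonal_mem (hL : IsPreHilbertLogic L) (hM : M ∈ L) : Mᗮ ∈ L := hL.2.2.1 M hM

theorem sup_span_singleton_mem (hL : IsPreHilbertLogic L) (hM : M ∈ L) (u : S) :
    M ⊔ (𝕜 ∙ u) ∈ L :=
  hL.2.2.2 M hM u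

theorem top_mem_s19 (hL : IsPreHilbertLogic L) : (⊤ : Submodule 𝕜 S) ∈ L :=
  bot_orthogonal_eq_top (𝕜 := 𝕜) (E := S) ▸ hL.orthogonal_mem hL.bot_mem

theorem span_singleton_mem (hL : IsPreHilbertLogic L) (u : S) : (𝕜 ∙ u) ∈ L := by
  simpa only [bot_sup_eq] using hL.sup_span_singleton_mem hL.bot_mem u

theorem inf_orthogonal_span_singleton_mem (hL : IsPreHilbertLogic L) (hM : M ∈ L) (u : S) :
    M ⊓ (𝕜 ∙ u)ᗮ ∈ L := by
  rw [← hL.orthogonal_orthogonal hM, inf_orthogonal]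
  exact hL.orthogonal_mem (hL.sup_span_singleton_mem (hL.orthogonal_mem hM) u)

end IsPreHilbertLogic

namespace IsLogicState

variable {L : Set (Submodule 𝕜 S)} {s : Submodule 𝕜 S → ℝ} {B C D M : Submodule 𝕜 S}

theorem add_orthogonal (hs : IsLogicState L s) (hL : IsPreHilbertLogic L) (hM : M ∈ L) :
    s M + s Mᗮ = 1 := by
  have hjoin : (M ⊔ Mᗮ)ᗮᗮ = ⊤ := by
    rw [← inf_orthogonal, hL.orthogonal_orthogonal hM, inf_comm, inf_orthogonal_eq_bot,
      bot_orthogonal_eq_top]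
  have h := hs.2.2 M Mᗮ hM (hL.orthogonal_mem hM) M.le_orthogonal_orthogonal
    (hjoin ▸ hL.top_mem_s19)
  rwa [hjoin, hs.2.1, eq_comm] at h

theorem apply_bot (hs : IsLogicState L s) (hL : IsPreHilbertLogic L) : s ⊥ = 0 := by
  have h := hs.add_orthogonal hL hL.top_mem_s19
  rw [top_orthogonal_eq_bot, hs.2.1] at h
  linarith

theorem add_eq_one_add_inf (hs : IsLogicState L s) (hL : IsPreHilbertLogic L) (hC : C ∈ L)
    (hD : D ∈ L) (hCD : Cᗮ ≤ D) (hinf : C ⊓ D ∈ L) : s C + s D = 1 + s (C ⊓ D) := by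
  have hjoin : (Dᗮ ⊔ Cᗮ)ᗮᗮ = (C ⊓ D)ᗮ := by
    rw [← inf_orthogonal Dᗮ, hL.orthogonal_orthogonal hD, hL.orthogonal_orthogonal hC, inf_comm]
  have h := hs.2.2 Dᗮ Cᗮ (hL.orthogonal_mem hD) (hL.orthogonal_mem hC) (orthogonal_le hCD)
    (hjoin ▸ hL.orthogonal_mem hinf)
  rw [hjoin] at h
  linarith [hs.add_orthogonal hL hC, hs.add_orthogonal hL hD, hs.add_orthogonal hL hinf]

theorem apply_eq_of_le_of_disjoint (hs : IsLogicState L s) (hL : IsPreHilbertLogic L)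
    (hB : B ∈ L) (hC : C ∈ L) (hBC : B ≤ C) (hdisj : Disjoint C Bᗮ) : s C = s B := by
  have h := hs.add_eq_one_add_inf hL hC (hL.orthogonal_mem hB) (orthogonal_le hBC)
    (hdisj.eq_bot ▸ hL.bot_mem)
  rw [hdisj.eq_bot, hs.apply_bot hL] at h
  linarith [hs.add_orthogonal hL hB]

theorem apply_span_singleton_eq_zero_of_notMem (hs : IsLogicState L s)
    (hL : IsPreHilbertLogic L) (hB : B ∈ L) {x : S} (hx : x ∉ B ⊔ Bᗮ) : s (𝕜 ∙ x) = 0 := by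
  have hBo := hL.orthogonal_mem hB
  have hxB : Disjoint (B ⊔ Bᗮ) (𝕜 ∙ x) := disjoint_span_singleton_of_notMem hx
  have hdisjC : Disjoint Bᗮ (B ⊔ 𝕜 ∙ x) :=
    B.orthogonal_disjoint.symm.disjoint_sup_right_of_disjoint_sup_left (sup_comm B Bᗮ ▸ hxB)
  have hdisjD : Disjoint B (Bᗮ ⊔ 𝕜 ∙ x) :=
    B.orthogonal_disjoint.disjoint_sup_right_of_disjoint_sup_left hxB
  have hCD : (B ⊔ 𝕜 ∙ x) ⊓ (Bᗮ ⊔ 𝕜 ∙ x) = 𝕜 ∙ x := by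
    rw [sup_comm B, sup_inf_assoc_of_le _ le_sup_right, hdisjD.eq_bot, sup_bot_eq]
  have hsC : s (B ⊔ 𝕜 ∙ x) = s B :=
    hs.apply_eq_of_le_of_disjoint hL hB (hL.sup_span_singleton_mem hB x) le_sup_left hdisjC.symm
  have hsD : s (Bᗮ ⊔ 𝕜 ∙ x) = s Bᗮ :=
    hs.apply_eq_of_le_of_disjoint hL hBo (hL.sup_span_singleton_mem hBo x) le_sup_left
      (by rw [hL.orthogonal_orthogonal hB]; exact hdisjD.symm)
  have h := hs.add_eq_one_add_inf hL (hL.sup_span_singleton_mem hB x)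
    (hL.sup_span_singleton_mem hBo x) ((orthogonal_le le_sup_left).trans le_sup_left)
    (by rw [hCD]; exact hL.span_singleton_mem x)
  rw [hCD, hsC, hsD] at h
  linarith [hs.add_orthogonal hL hB]

theorem apply_span_singleton_eq_zero_of_sup_orthogonal_ne_top (hs : IsLogicState L s)
    (hL : IsPreHilbertLogic L)
    (hsymm : ∀ (U : S ≃ₗᵢ[𝕜] S), ∀ M ∈ L, Submodule.map (U.toLinearEquiv : S →ₗ[𝕜] S) M ∈ L)
    (hB : B ∈ L) (hBs : B ⊔ Bᗮ ≠ ⊤) {u : S} (hu : u ≠ 0) : s (𝕜 ∙ u) = 0 := by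
  obtain ⟨x, hx⟩ : ∃ x, x ∉ B ⊔ Bᗮ := by simpa only [ne_eq, eq_top_iff', not_forall] using hBs
  have hx0 : x ≠ 0 := by rintro rfl; exact hx (zero_mem _)
  obtain ⟨T, hT⟩ := exists_linearIsometryEquiv_span_singleton_eq (𝕜 := 𝕜) hx0 hu
  set B' := B.map (T.toLinearEquiv : S →ₗ[𝕜] S)
  have hTx : T x ∉ B' ⊔ B'ᗮ := by
    rw [← map_orthogonal_equiv, ← Submodule.map_sup, mem_map_equiv]
    simpa using hx
  rw [← hT]
  exact hs.apply_span_singleton_eq_zero_of_notMem hL (hsymm T B hB) hTx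

theorem apply_eq_apply_inf_add (hs : IsLogicState L s) (hL : IsPreHilbertLogic L) (hM : M ∈ L)
    {u : S} (hu : u ∈ M) : s M = s (M ⊓ (𝕜 ∙ u)ᗮ) + s (𝕜 ∙ u) := by
  have h := hs.add_eq_one_add_inf hL hM (hL.orthogonal_mem (hL.span_singleton_mem u))
    (orthogonal_le ((span_singleton_le_iff_mem u M).2 hu))
    (hL.inf_orthogonal_span_singleton_mem hM u)
  linarith [hs.add_orthogonal hL (hL.span_singleton_mem u)]

theorem apply_eq_zero_of_finiteDimensional (hs : IsLogicState L s) (hL : IsPreHilbertLogic L)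
    (hfree : ∀ u : S, u ≠ 0 → s (𝕜 ∙ u) = 0) (hM : M ∈ L) [FiniteDimensional 𝕜 M] :
    s M = 0 := by
  induction hn : Module.finrank 𝕜 M using Nat.strong_induction_on generalizing M with
  | _ n ih =>
  rcases eq_or_ne M ⊥ with rfl | hM0
  · exact hs.apply_bot hL
  obtain ⟨u, huM, hu⟩ := M.ne_bot_iff.1 hM0
  have hlt : M ⊓ (𝕜 ∙ u)ᗮ < M := inf_le_left.lt_of_ne fun h =>
    hu (inner_self_eq_zero.1 (mem_orthogonal_singleton_iff_inner_right.1 (h ▸ huM).2))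
  rw [hs.apply_eq_apply_inf_add hL hM huM, hfree u hu, add_zero]
  exact ih _ (hn ▸ finrank_lt_finrank_of_lt hlt) (hL.inf_orthogonal_span_singleton_mem hM u) rfl

end IsLogicState

open scoped Classical in
noncomputable def vectorState (e : S) (M : Submodule 𝕜 S) : ℝ :=
  if h : M.HasOrthogonalProjection then ‖(haveI := h; M.starProjection e)‖ ^ 2 else 0

theorem vectorState_eq (e : S) (M : Submodule 𝕜 S) [M.HasOrthogonalProjection] :
    vectorState e M = ‖M.starProjection e‖ ^ 2 :=
  dif_pos ‹_›

theorem isLogicState_vectorState {L : Set (Submodule 𝕜 S)} (hsplit : ∀ M ∈ L, M ⊔ Mᗮ = ⊤)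
    {e : S} (he : ‖e‖ = 1) : IsLogicState L (vectorState e) := by
  have hproj (M : Submodule 𝕜 S) (hM : M ∈ L) : M.HasOrthogonalProjection :=
    hasOrthogonalProjection_of_sup_orthogonal_eq_top (hsplit M hM)
  refine ⟨fun M hM => ?_, ?_, fun A B hA hB hAB hJ => ?_⟩
  · have := hproj M hM
    rw [vectorState_eq]
    exact ⟨by positivity, pow_le_one₀ (norm_nonneg _) (he ▸ M.norm_starProjection_apply_le e)⟩
  · rw [vectorState_eq, starProjection_top, ContinuousLinearMap.id_apply, he, one_pow]
  · have := hproj A hA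
    have := hproj B hB
    have := hproj _ hJ
    have hBA : B ≤ Aᗮ := IsOrtho.symm hAB
    have hsum : ((A ⊔ B)ᗮᗮ).starProjection e = A.starProjection e + B.starProjection e := by
      refine eq_starProjection_of_mem_orthogonal ((A ⊔ B).le_orthogonal_orthogonal
        (add_mem_sup (A.starProjection_apply_mem e) (B.starProjection_apply_mem e))) ?_
      rw [triorthogonal_eq_orthogonal, ← inf_orthogonal]
      refine ⟨?_, ?_⟩
      · rw [← sub_sub]
        exact sub_mem (A.sub_starProjection_mem_orthogonal e) (hBA (B.starProjection_apply_mem e))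
      · rw [add_comm, ← sub_sub]
        exact sub_mem (B.sub_starProjection_mem_orthogonal e) (hAB (A.starProjection_apply_mem e))
    have horth : ⟪A.starProjection e, B.starProjection e⟫_𝕜 = 0 :=
      inner_right_of_mem_orthogonal (A.starProjection_apply_mem e)
        (hBA (B.starProjection_apply_mem e))
    rw [vectorState_eq, vectorState_eq, vectorState_eq, hsum, sq, sq, sq,
      norm_add_sq_eq_norm_sq_add_norm_sq_of_inner_eq_zero _ _ horth]

theorem vectorState_span_singleton_self {e : S} (he : ‖e‖ = 1) : vectorState e (𝕜 ∙ e) = 1 := by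
  rw [vectorState_eq, starProjection_eq_self_iff.2 (mem_span_singleton_self e), he, one_pow]

theorem exists_nonfree_state [Nontrivial S] {L : Set (Submodule 𝕜 S)} (hL : IsPreHilbertLogic L)
    (hsplit : ∀ M ∈ L, M ⊔ Mᗮ = ⊤) :
    ∃ s : Submodule 𝕜 S → ℝ, IsLogicState L s ∧ ∃ M ∈ L, FiniteDimensional 𝕜 M ∧ s M ≠ 0 := by
  obtain ⟨v, hv⟩ := exists_ne (0 : S)
  set e := (‖v‖⁻¹ : 𝕜) • v
  have he : ‖e‖ = 1 := norm_smul_inv_norm hv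
  exact ⟨vectorState e, isLogicState_vectorState hsplit he, 𝕜 ∙ e, hL.span_singleton_mem e,
    inferInstance, by rw [vectorState_span_singleton_self he]; exact one_ne_zero⟩

/-- For a (symmetric) pre-Hilbert space logic `(S, L)`: if `L` contains a non-splitting
subspace `B` (`B + Bᗮ ≠ S`), then every state on `(S, L)` is free, i.e. vanishes on all
one-dimensional subspaces; and `(S, L)` admits a non-free state (one not vanishing on some
finite dimensional member of `L`) if and only if every member of `L` is splitting. -/
theorem nonfree_state_iff_splitting [Nontrivial S]
    (L : Set (Submodule 𝕜 S)) (hL : IsPreHilbertLogic L)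
    (hsymm : ∀ (U : S ≃ₗᵢ[𝕜] S), ∀ M ∈ L, Submodule.map (U.toLinearEquiv : S →ₗ[𝕜] S) M ∈ L) :
    ((∃ B ∈ L, B ⊔ Bᗮ ≠ ⊤) →
      ∀ s : Submodule 𝕜 S → ℝ, IsLogicState L s → ∀ u : S, u ≠ 0 → s (𝕜 ∙ u) = 0) ∧
      ((∃ s : Submodule 𝕜 S → ℝ, IsLogicState L s ∧
          ∃ M ∈ L, FiniteDimensional 𝕜 M ∧ s M ≠ 0) ↔
        ∀ M ∈ L, M ⊔ Mᗮ = ⊤) := by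
  have hfree : (∃ B ∈ L, B ⊔ Bᗮ ≠ ⊤) →
      ∀ s : Submodule 𝕜 S → ℝ, IsLogicState L s → ∀ u : S, u ≠ 0 → s (𝕜 ∙ u) = 0 :=
    fun ⟨B, hB, hBs⟩ s hs u hu =>
      hs.apply_span_singleton_eq_zero_of_sup_orthogonal_ne_top hL hsymm hB hBs hu
  refine ⟨hfree, ⟨fun ⟨s, hs, M, hM, _, hsM⟩ => ?_, exists_nonfree_state hL⟩⟩
  by_contra hnot
  push Not at hnot
  exact hsM (hs.apply_eq_zero_of_finiteDimensional hL (hfree hnot s hs) hM)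
end
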